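/- arXiv:0712.3442 — 7 statements merged into one kernel-verified Lean document; each statement's English description precedes it below -/
import Mathlib

section
/- Let X ≥ 0 be a random variable with distribution function F and tail F̄(x) = P[X > x]. Suppose there exists a nondecreasing sequence b_n → ∞ such that for every x > 0, n·F̄(b_n x) → x^{-α} as n → ∞, where α > 0. Then F̄ is regularly varying with index −α, i.e., for every s > 0, lim_{t→∞} F̄(ts)/F̄(t) = s^{-α}. -/
/-!
On each block `b n ≤ t < b (n + 1)` monotonicity of the tail sandwiches `F̄(ts)/F̄(t)` between
`F̄(b (n+1) s)/F̄(b n)` and `F̄(b n s)/F̄(b (n+1))`. Multiplying numerator and denominator by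
`n + 1`, both bounds tend to `s^{-α}`, because `n F̄(b n) → 1` and `(n + 1)/n → 1`.
-/

open MeasureTheory ProbabilityTheory Filter Topology

theorem exists_index_mem_Ico_of_tendsto_atTop {b : ℕ → ℝ} (hb : Tendsto b atTop atTop) :
    ∃ N : ℝ → ℕ, Tendsto N atTop atTop ∧
      ∀ᶠ t in atTop, t ∈ Set.Ico (b (N t)) (b (N t + 1)) := by
  have hbdd : ∀ t : ℝ, BddAbove {n | b n ≤ t} := fun t => by
    obtain ⟨M, hM⟩ := eventually_atTop.mp (hb.eventually_gt_atTop t)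
    exact ⟨M, fun n hn => not_lt.mp fun h => (hM n h.le).not_ge hn⟩
  have hle : ∀ m t, b m ≤ t → m ≤ sSup {n | b n ≤ t} := fun m t h => le_csSup (hbdd t) h
  refine ⟨fun t => sSup {n | b n ≤ t}, tendsto_atTop.mpr fun m => ?_, ?_⟩
  · filter_upwards [eventually_ge_atTop (b m)] with t ht using hle m t ht
  · filter_upwards [eventually_ge_atTop (b 0)] with t ht
    refine ⟨Nat.sSup_mem ⟨0, ht⟩ (hbdd t), not_le.mp fun h => ?_⟩
    have := hle _ t h
    omega

theorem tendsto_of_squeeze_on_Ico {f : ℝ → ℝ} {b u v : ℕ → ℝ} {L : ℝ}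
    (hb : Tendsto b atTop atTop) (hu : Tendsto u atTop (𝓝 L)) (hv : Tendsto v atTop (𝓝 L))
    (huv : ∀ᶠ n in atTop, ∀ t ∈ Set.Ico (b n) (b (n + 1)), u n ≤ f t ∧ f t ≤ v n) :
    Tendsto f atTop (𝓝 L) := by
  obtain ⟨N, hN, hmem⟩ := exists_index_mem_Ico_of_tendsto_atTop hb
  have hbounds := hmem.and (hN.eventually huv)
  exact tendsto_of_tendsto_of_tendsto_of_le_of_le' (hu.comp hN) (hv.comp hN)
    (hbounds.mono fun t ht => (ht.2 t ht.1).1) (hbounds.mono fun t ht => (ht.2 t ht.1).2)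

theorem tendsto_succ_mul_of_tendsto_natCast_mul {u : ℕ → ℝ} {a : ℝ}
    (h : Tendsto (fun n : ℕ => n * u n) atTop (𝓝 a)) :
    Tendsto (fun n : ℕ => (n + 1 : ℝ) * u n) atTop (𝓝 a) := by
  have hu : Tendsto u atTop (𝓝 0) := by
    refine (h.div_atTop tendsto_natCast_atTop_atTop).congr' ?_
    filter_upwards [eventually_ge_atTop 1] with n hn
    have : (n : ℝ) ≠ 0 := by positivity
    field_simp
  simpa [add_mul] using h.add hu

theorem tendsto_div_of_tendsto_natCast_mul {F G : ℝ → ℝ} {b : ℕ → ℝ} {c L : ℝ}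
    (hF : Antitone F) (hG : Antitone G) (hG0 : ∀ x, 0 ≤ G x) (hb : Tendsto b atTop atTop)
    (hc : 0 < c) (hFb : Tendsto (fun n : ℕ => n * F (b n)) atTop (𝓝 c))
    (hGb : Tendsto (fun n : ℕ => n * G (b n)) atTop (𝓝 L)) :
    Tendsto (fun t => G t / F t) atTop (𝓝 (L / c)) := by
  have hshift {H : ℝ → ℝ} {a : ℝ} (hH : Tendsto (fun n : ℕ => n * H (b n)) atTop (𝓝 a)) :
      Tendsto (fun n : ℕ => (n + 1 : ℝ) * H (b (n + 1))) atTop (𝓝 a) := by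
    refine (hH.comp (tendsto_add_atTop_nat 1)).congr fun n => ?_
    simp
  have hlower : Tendsto (fun n => G (b (n + 1)) / F (b n)) atTop (𝓝 (L / c)) :=
    ((hshift hGb).div (tendsto_succ_mul_of_tendsto_natCast_mul hFb) hc.ne').congr
      fun n => mul_div_mul_left _ _ (by positivity)
  have hupper : Tendsto (fun n => G (b n) / F (b (n + 1))) atTop (𝓝 (L / c)) :=
    ((tendsto_succ_mul_of_tendsto_natCast_mul hGb).div (hshift hFb) hc.ne').congr
      fun n => mul_div_mul_left _ _ (by positivity)
  have hpos : ∀ᶠ n : ℕ in atTop, 0 < F (b n) :=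
    (hFb.eventually (lt_mem_nhds hc)).mono fun n hn => pos_of_mul_pos_right hn n.cast_nonneg
  refine tendsto_of_squeeze_on_Ico hb hlower hupper ?_
  filter_upwards [(tendsto_add_atTop_nat 1).eventually hpos] with n hn t ht
  have hFt : 0 < F t := hn.trans_le (hF ht.2.le)
  exact ⟨div_le_div₀ (hG0 _) (hG ht.2.le) hFt (hF ht.1),
    div_le_div₀ (hG0 _) (hG ht.1) hn (hF ht.2.le)⟩

theorem antitone_toReal_measure_lt {Ω : Type*} [MeasurableSpace Ω] (μ : Measure Ω)
    [IsFiniteMeasure μ] (X : Ω → ℝ) : Antitone fun x => (μ {ω | x < X ω}).toReal :=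
  fun _ _ hxy => ENNReal.toReal_mono (measure_ne_top _ _)
    (measure_mono fun _ hω => lt_of_le_of_lt hxy hω)

theorem stmt_0_general {Ω : Type*} [MeasureSpace Ω] [IsProbabilityMeasure (ℙ : Measure Ω)]
    (X : Ω → ℝ)
    (Fbar : ℝ → ℝ) (hFbar : ∀ x, Fbar x = (ℙ {ω | x < X ω}).toReal)
    (α : ℝ)
    (b : ℕ → ℝ) (hb_top : Tendsto b atTop atTop)
    (hlim : ∀ x > 0, Tendsto (fun n : ℕ => (n : ℝ) * Fbar (b n * x)) atTop
      (nhds (x ^ (-α)))) :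
    ∀ s > 0, Tendsto (fun t : ℝ => Fbar (t * s) / Fbar t) atTop (nhds (s ^ (-α))) := by
  intro s hs
  have hF : Antitone Fbar := funext hFbar ▸ antitone_toReal_measure_lt ℙ X
  have hF0 (x : ℝ) : 0 ≤ Fbar x := hFbar x ▸ ENNReal.toReal_nonneg
  have hlim_one : Tendsto (fun n : ℕ => n * Fbar (b n)) atTop (𝓝 1) := by
    simpa using hlim 1 one_pos
  simpa using tendsto_div_of_tendsto_natCast_mul hF
    (hF.comp_monotone (monotone_mul_right_of_nonneg hs.le)) (fun _ => hF0 _)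
    hb_top one_pos hlim_one (hlim s hs)

/-- If `X ≥ 0` has distribution tail `F̄` and there is a nondecreasing sequence
`b_n → ∞` with `n·F̄(b_n x) → x^{-α}` for every `x > 0`, then `F̄` is regularly
varying with index `-α`. -/
theorem stmt_0 {Ω : Type*} [MeasureSpace Ω] [IsProbabilityMeasure (ℙ : Measure Ω)]
    (X : Ω → ℝ) (hXm : Measurable X) (hX0 : ∀ ω, 0 ≤ X ω)
    (Fbar : ℝ → ℝ) (hFbar : ∀ x, Fbar x = (ℙ {ω | x < X ω}).toReal)
    (α : ℝ) (hα : 0 < α)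
    (b : ℕ → ℝ) (hb_mono : Monotone b) (hb_top : Tendsto b atTop atTop)
    (hlim : ∀ x > 0, Tendsto (fun n : ℕ => (n : ℝ) * Fbar (b n * x)) atTop
      (nhds (x ^ (-α)))) :
    ∀ s > 0, Tendsto (fun t : ℝ => Fbar (t * s) / Fbar t) atTop (nhds (s ^ (-α))) :=
  stmt_0_general X Fbar hFbar α b hb_top hlim
end

section
/- Let C ⊆ ℝ^d be a cone (i.e., x ∈ C and t > 0 imply tx ∈ C) containing the vector 𝟏 = (1,…,1). Let h : C → (0,∞) be measurable and suppose there is a function λ : C → (0,∞) such that for every x ∈ C, h(tx)/h(t𝟏) → λ(x) as t → ∞. Then there exists ρ ∈ ℝ such that λ(sx) = s^ρ λ(x) for all s > 0 and all x ∈ C; in particular the exponent ρ does not depend on x. -/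
/-!
Comparing `h(t s x)/h(t 𝟏)` with `h(t s x)/h(t s 𝟏) · h(t s 𝟏)/h(t 𝟏)` shows
`λ(s x) = λ(s 𝟏) λ(x)`, so `G(s) = λ(s 𝟏)` is multiplicative on `(0, ∞)`.
As a pointwise limit of measurable functions `G` is measurable, hence `u ↦ log G(eᵘ)` is a
measurable solution of Cauchy's equation, therefore linear, i.e. `G(s) = s^ρ`.
-/

open Filter Topology

theorem eq_mul_of_measurable_of_map_add {φ : ℝ → ℝ} (hφ : Measurable φ)
    (hadd : ∀ u v, φ (u + v) = φ u + φ v) (u : ℝ) : φ u = u * φ 1 := by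
  let f : ℝ →+ ℝ := AddMonoidHom.mk' φ hadd
  have hf : Continuous f := MeasureTheory.Measure.AddMonoidHom.continuous_of_measurable f hφ
  simpa [f] using map_real_smul f hf u 1

theorem exists_rpow_of_measurable_comp_exp_of_map_mul {G : ℝ → ℝ}
    (hG : Measurable (G ∘ Real.exp))
    (hpos : ∀ s, 0 < s → 0 < G s) (hmul : ∀ s t, 0 < s → 0 < t → G (s * t) = G s * G t) :
    ∃ ρ : ℝ, ∀ s, 0 < s → G s = s ^ ρ := by
  set φ : ℝ → ℝ := fun u => Real.log (G (Real.exp u))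
  have hadd : ∀ u v, φ (u + v) = φ u + φ v := fun u v => by
    simp only [φ, Real.exp_add, hmul _ _ (Real.exp_pos u) (Real.exp_pos v)]
    exact Real.log_mul (hpos _ (Real.exp_pos u)).ne' (hpos _ (Real.exp_pos v)).ne'
  have hφ : Measurable φ := Real.measurable_log.comp hG
  refine ⟨φ 1, fun s hs => ?_⟩
  have hlin := eq_mul_of_measurable_of_map_add hφ hadd (Real.log s)
  simp only [φ, Real.exp_log hs] at hlin
  rw [← Real.exp_log (hpos s hs), hlin, Real.rpow_def_of_pos hs]

theorem measurable_of_tendsto_div_smul {α E : Type*} [MeasurableSpace α] [MeasurableSpace E]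
    [SMul ℝ E] [MeasurableConstSMul ℝ E] {h : E → ℝ} (hh : Measurable h) {g : α → E}
    (hg : Measurable g) {o : E} {L : α → ℝ}
    (hL : ∀ a, Tendsto (fun t : ℝ => h (t • g a) / h (t • o)) atTop (𝓝 (L a))) :
    Measurable L := by
  refine measurable_of_tendsto_metrizable
    (f := fun (n : ℕ) a => h ((n : ℝ) • g a) / h ((n : ℝ) • o))
    (fun n => (hh.comp (hg.const_smul (n : ℝ))).div_const _) ?_
  exact tendsto_pi_nhds.2 fun a => (hL a).comp tendsto_natCast_atTop_atTop

theorem eq_mul_of_tendsto_div_smul {E : Type*} [MulAction ℝ E] {h : E → ℝ} {o x : E}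
    {s a b c : ℝ} (hs : 0 < s) (ho : ∀ t : ℝ, 0 < t → h (t • o) ≠ 0)
    (hx : Tendsto (fun t : ℝ => h (t • x) / h (t • o)) atTop (𝓝 a))
    (hso : Tendsto (fun t : ℝ => h (t • s • o) / h (t • o)) atTop (𝓝 b))
    (hsx : Tendsto (fun t : ℝ => h (t • s • x) / h (t • o)) atTop (𝓝 c)) :
    c = b * a := by
  have hprod : Tendsto
      (fun t : ℝ => h ((t * s) • x) / h ((t * s) • o) * (h (t • s • o) / h (t • o)))
      atTop (𝓝 (a * b)) :=
    (hx.comp (tendsto_id.atTop_mul_const hs)).mul hso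
  have hsplit : ∀ᶠ t : ℝ in atTop,
      h ((t * s) • x) / h ((t * s) • o) * (h (t • s • o) / h (t • o)) =
        h (t • s • x) / h (t • o) := by
    filter_upwards [eventually_gt_atTop (0 : ℝ)] with t ht
    rw [smul_smul, smul_smul, div_mul_div_cancel₀ (ho _ (mul_pos ht hs))]
  rw [tendsto_nhds_unique hsx (hprod.congr' hsplit), mul_comm]

/-- If `h` is measurable and regularly varying on a cone `C ∋ 𝟏` of `ℝ^d` with
positive limit function `λ`, i.e. `h(tx)/h(t𝟏) → λ(x) > 0` for all `x ∈ C`, then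
there is a single exponent `ρ ∈ ℝ` such that `λ(sx) = s^ρ λ(x)` for all `s > 0`,
`x ∈ C`. -/
theorem stmt_3 {d : ℕ} (C : Set (Fin d → ℝ))
    (hcone : ∀ x ∈ C, ∀ t : ℝ, 0 < t → t • x ∈ C)
    (hone : (fun _ : Fin d => (1 : ℝ)) ∈ C)
    (h : (Fin d → ℝ) → ℝ) (hmeas : Measurable h) (hpos : ∀ x ∈ C, 0 < h x)
    (lam : (Fin d → ℝ) → ℝ) (hlampos : ∀ x ∈ C, 0 < lam x)
    (hlim : ∀ x ∈ C, Tendsto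
      (fun t : ℝ => h (t • x) / h (t • (fun _ : Fin d => (1 : ℝ)))) atTop
      (nhds (lam x))) :
    ∃ ρ : ℝ, ∀ s : ℝ, 0 < s → ∀ x ∈ C, lam (s • x) = s ^ ρ * lam x := by
  set o : Fin d → ℝ := fun _ => 1
  have ho : ∀ t : ℝ, 0 < t → h (t • o) ≠ 0 := fun t ht => (hpos _ (hcone o hone t ht)).ne'
  have hlam_smul : ∀ s : ℝ, 0 < s → ∀ x ∈ C, lam (s • x) = lam (s • o) * lam x :=
    fun s hs x hx => eq_mul_of_tendsto_div_smul hs ho (hlim x hx)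
      (hlim _ (hcone o hone s hs)) (hlim _ (hcone x hx s hs))
  obtain ⟨ρ, hρ⟩ :=
    exists_rpow_of_measurable_comp_exp_of_map_mul (G := fun s => lam (s • o))
      (measurable_of_tendsto_div_smul hmeas (Real.measurable_exp.smul_const o)
        fun u => hlim _ (hcone o hone _ (Real.exp_pos u)))
      (fun s hs => hlampos _ (hcone o hone s hs))
      (fun s t hs ht => by simp only [← smul_smul, hlam_smul s hs _ (hcone o hone t ht)])
  exact ⟨ρ, fun s hs x hx => by rw [hlam_smul s hs x hx, hρ s hs]⟩
end

section
/- Let a : (0,∞) → (0,∞) and b : (0,∞) → ℝ be measurable and suppose there is a function ψ : (0,∞) → ℝ, not identically zero and not constant, such that for every x > 0, (b(tx) − b(t))/a(t) → ψ(x) as t → ∞. Then there exist ρ ∈ ℝ and k ≠ 0 such that ψ(x) = k·(x^ρ − 1)/ρ for all x > 0 if ρ ≠ 0, and ψ(x) = k·log x for all x > 0 if ρ = 0. -/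
open Filter

/-!
Fix `y₀` with `ψ y₀ ≠ 0`. Comparing the increments of `b` over `[t, t x]` and `[t x, t x y₀]`
shows that `a (t x) / a t` converges to some `g x`; then `g` is a measurable solution of
`g (x y) = g x g y` on `(0, ∞)`, hence `g x = x ^ ρ`, and passing to the limit in
`b (t x y) - b t = (b (t x y) - b (t x)) + (b (t x) - b t)` gives `ψ (x y) = ψ x + x ^ ρ ψ y`.
For `ρ = 0` this is Cauchy's equation for `ψ ∘ exp`, so `ψ = k log`; for `ρ ≠ 0` the symmetry
in `x, y` forces `ψ x (y ^ ρ - 1) = ψ y (x ^ ρ - 1)`, so `ψ` is a multiple of `x ^ ρ - 1`.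
-/

open Real Topology

theorem eq_mul_of_measurable_of_map_add_s8 {f : ℝ → ℝ} (hf : Measurable f)
    (hadd : ∀ x y, f (x + y) = f x + f y) (x : ℝ) : f x = f 1 * x := by
  let F : ℝ →+ ℝ := AddMonoidHom.mk' f hadd
  simpa [F, mul_comm] using map_real_smul F (MeasureTheory.Measure.AddMonoidHom.continuous_of_measurable F hf) x 1

theorem eq_mul_log_of_map_mul {φ : ℝ → ℝ} (hφ : Measurable fun u => φ (exp u))
    (hmul : ∀ x, 0 < x → ∀ y, 0 < y → φ (x * y) = φ x + φ y) {x : ℝ} (hx : 0 < x) :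
    φ x = φ (exp 1) * log x := by
  simpa [exp_log hx] using eq_mul_of_measurable_of_map_add_s8 hφ
    (fun u v => by rw [exp_add, hmul _ (exp_pos u) _ (exp_pos v)]) (log x)

theorem exists_eq_rpow_of_map_mul {g : ℝ → ℝ} (hg : Measurable fun u => g (exp u))
    (hpos : ∀ x, 0 < x → 0 < g x) (hmul : ∀ x, 0 < x → ∀ y, 0 < y → g (x * y) = g x * g y) :
    ∃ ρ : ℝ, ∀ x, 0 < x → g x = x ^ ρ := by
  have hlog : ∀ x, 0 < x → log (g x) = log (g (exp 1)) * log x :=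
    fun x hx => eq_mul_log_of_map_mul (φ := fun x => log (g x)) (measurable_log.comp hg)
      (fun x hx y hy => by rw [hmul x hx y hy, log_mul (hpos x hx).ne' (hpos y hy).ne']) hx
  refine ⟨log (g (exp 1)), fun x hx => ?_⟩
  rw [rpow_def_of_pos hx, ← exp_log (hpos x hx), hlog x hx, mul_comm]

theorem eq_mul_rpow_sub_one_of_map_mul {ψ : ℝ → ℝ} {ρ : ℝ} (hρ : ρ ≠ 0)
    (hψ : ∀ x, 0 < x → ∀ y, 0 < y → ψ (x * y) = ψ x + x ^ ρ * ψ y) {x : ℝ} (hx : 0 < x) :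
    ψ x = ψ (exp 1) / (exp ρ - 1) * (x ^ ρ - 1) := by
  have hsymm := hψ x hx _ (exp_pos 1)
  rw [mul_comm, hψ _ (exp_pos 1) x hx, exp_one_rpow] at hsymm
  have : exp ρ - 1 ≠ 0 := sub_ne_zero.2 fun h => hρ (by simpa using h)
  field_simp
  linarith

theorem measurable_comp_exp_of_tendsto {F : ℝ → ℝ → ℝ} {φ : ℝ → ℝ}
    (hF : ∀ t, Measurable (F t))
    (h : ∀ x, 0 < x → Tendsto (fun t => F t x) atTop (𝓝 (φ x))) :
    Measurable fun u => φ (exp u) :=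
  measurable_of_tendsto_metrizable (f := fun (n : ℕ) u => F n (exp u))
    (fun n => (hF n).comp measurable_exp)
    (tendsto_pi_nhds.2 fun u => (h _ (exp_pos u)).comp tendsto_natCast_atTop_atTop)

theorem Filter.Tendsto.comp_mul_const_atTop {φ : ℝ → ℝ} {l : Filter ℝ} (h : Tendsto φ atTop l)
    {x : ℝ} (hx : 0 < x) : Tendsto (fun t => φ (t * x)) atTop l :=
  h.comp (tendsto_id.atTop_mul_const hx)

/-- `f` is regularly varying with limit function `g`. -/
def RegVarLimit (f g : ℝ → ℝ) : Prop :=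
  ∀ x, 0 < x → Tendsto (fun t => f (t * x) / f t) atTop (𝓝 (g x))

/-- `b` is of extended regular variation with auxiliary function `a` and limit function `ψ`. -/
def ExtRegVarLimit (b a ψ : ℝ → ℝ) : Prop :=
  ∀ x, 0 < x → Tendsto (fun t => (b (t * x) - b t) / a t) atTop (𝓝 (ψ x))

namespace RegVarLimit

variable {f g : ℝ → ℝ} (hf : ∀ t, 0 < t → 0 < f t) (h : RegVarLimit f g)
include hf h

theorem map_one : g 1 = 1 := by
  refine tendsto_nhds_unique (h 1 one_pos) (tendsto_const_nhds.congr' ?_)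
  filter_upwards [eventually_gt_atTop 0] with t ht
  rw [mul_one, div_self (hf t ht).ne']

theorem map_mul {x y : ℝ} (hx : 0 < x) (hy : 0 < y) : g (x * y) = g x * g y := by
  have hprod := ((h y hy).comp_mul_const_atTop hx).mul (h x hx)
  rw [tendsto_nhds_unique (h _ (mul_pos hx hy)) (hprod.congr' ?_), mul_comm]
  filter_upwards [eventually_gt_atTop 0] with t ht
  have := (hf _ (mul_pos ht hx)).ne'
  rw [← mul_assoc, div_mul_div_cancel₀ this]

theorem pos {x : ℝ} (hx : 0 < x) : 0 < g x := by
  have hnonneg : 0 ≤ g x := ge_of_tendsto (h x hx) <| by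
    filter_upwards [eventually_gt_atTop 0] with t ht
    exact (div_pos (hf _ (mul_pos ht hx)) (hf t ht)).le
  refine hnonneg.lt_of_ne fun h0 => ?_
  have := map_mul hf h hx (inv_pos.2 hx)
  rw [mul_inv_cancel₀ hx.ne', map_one hf h, ← h0, zero_mul] at this
  exact one_ne_zero this

theorem exists_eq_rpow (hmeas : Measurable f) : ∃ ρ : ℝ, ∀ x, 0 < x → g x = x ^ ρ :=
  exists_eq_rpow_of_map_mul
    (measurable_comp_exp_of_tendsto (fun t => (hmeas.comp (measurable_const_mul t)).div_const _) h)
    (fun _ => pos hf h) (fun _ hx _ hy => map_mul hf h hx hy)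

end RegVarLimit

namespace ExtRegVarLimit

variable {a b ψ : ℝ → ℝ} (ha : ∀ t, 0 < t → 0 < a t) (h : ExtRegVarLimit b a ψ)
include ha h

theorem regVarLimit {y : ℝ} (hy : 0 < y) (hψy : ψ y ≠ 0) :
    RegVarLimit a fun x => (ψ (x * y) - ψ x) / ψ y := by
  intro x hx
  have hnum := (h _ (mul_pos hx hy)).sub (h x hx)
  have hden := (h y hy).comp_mul_const_atTop hx
  refine ((hnum.div hden hψy).congr' ?_)
  filter_upwards [hden.eventually_ne hψy, eventually_gt_atTop 0] with t hne ht
  have := (ha t ht).ne'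
  have := (ha _ (mul_pos ht hx)).ne'
  have : b (t * x * y) - b (t * x) ≠ 0 := left_ne_zero_of_mul (by simpa [div_eq_mul_inv] using hne)
  dsimp only [Pi.div_apply]
  rw [← mul_assoc]
  field_simp
  ring

theorem map_mul {g : ℝ → ℝ} (hg : RegVarLimit a g) {x y : ℝ} (hx : 0 < x) (hy : 0 < y) :
    ψ (x * y) = ψ x + g x * ψ y := by
  have hsum := (h x hx).add (((h y hy).comp_mul_const_atTop hx).mul (hg x hx))
  rw [tendsto_nhds_unique (h _ (mul_pos hx hy)) (hsum.congr' ?_), mul_comm]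
  filter_upwards [eventually_gt_atTop 0] with t ht
  have := (ha t ht).ne'
  have := (ha _ (mul_pos ht hx)).ne'
  rw [← mul_assoc]
  field_simp
  ring

end ExtRegVarLimit

theorem stmt_8_general (a : ℝ → ℝ) (b : ℝ → ℝ) (ha_meas : Measurable a)
    (hb_meas : Measurable b) (ha_pos : ∀ t : ℝ, 0 < t → 0 < a t)
    (ψ : ℝ → ℝ)
    (hψ_ne : ∃ x : ℝ, 0 < x ∧ ψ x ≠ 0)
    (hlim : ∀ x : ℝ, 0 < x →
      Tendsto (fun t : ℝ => (b (t * x) - b t) / a t) atTop (nhds (ψ x))) :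
    ∃ ρ : ℝ, ∃ k : ℝ, k ≠ 0 ∧
      ((ρ ≠ 0 → ∀ x : ℝ, 0 < x → ψ x = k * ((x ^ ρ - 1) / ρ)) ∧
       (ρ = 0 → ∀ x : ℝ, 0 < x → ψ x = k * Real.log x)) := by
  have h : ExtRegVarLimit b a ψ := hlim
  obtain ⟨y₀, hy₀, hψy₀⟩ := hψ_ne
  have hg := h.regVarLimit ha_pos hy₀ hψy₀
  obtain ⟨ρ, hρ⟩ := hg.exists_eq_rpow ha_pos ha_meas
  have hψ : ∀ x, 0 < x → ∀ y, 0 < y → ψ (x * y) = ψ x + x ^ ρ * ψ y :=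
    fun x hx y hy => by rw [h.map_mul ha_pos hg hx hy, hρ x hx]
  rcases eq_or_ne ρ 0 with rfl | hρ0
  · have hmeas := measurable_comp_exp_of_tendsto
      (fun t => ((hb_meas.comp (measurable_const_mul t)).sub_const _).div_const _) h
    have hlog := fun x (hx : 0 < x) => eq_mul_log_of_map_mul hmeas (by simpa using hψ) hx
    refine ⟨0, ψ (exp 1), fun hk => hψy₀ ?_, fun h0 => (h0 rfl).elim, fun _ => hlog⟩
    rw [hlog y₀ hy₀, hk, zero_mul]
  · have hpow := fun x (hx : 0 < x) => eq_mul_rpow_sub_one_of_map_mul hρ0 hψ hx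
    refine ⟨ρ, ψ (exp 1) / (exp ρ - 1) * ρ, mul_ne_zero (fun hk => hψy₀ ?_) hρ0,
      fun _ x hx => ?_, fun h0 => (hρ0 h0).elim⟩
    · rw [hpow y₀ hy₀, hk, zero_mul]
    · rw [hpow x hx]
      field_simp

/-- Representation of limits in extended regular variation: if `a > 0`, `b` are
measurable with `(b(tx) - b(t))/a(t) → ψ(x)` for all `x > 0` where `ψ` is not
identically zero and not constant on `(0,∞)`, then there are `ρ ∈ ℝ` and `k ≠ 0`
with `ψ(x) = k (x^ρ - 1)/ρ` for all `x > 0` (where for `ρ = 0` the formula is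
interpreted as `ψ(x) = k log x`). -/
theorem stmt_8 (a : ℝ → ℝ) (b : ℝ → ℝ) (ha_meas : Measurable a)
    (hb_meas : Measurable b) (ha_pos : ∀ t : ℝ, 0 < t → 0 < a t)
    (ψ : ℝ → ℝ)
    (hψ_ne : ∃ x : ℝ, 0 < x ∧ ψ x ≠ 0)
    (hψ_nc : ∃ x : ℝ, 0 < x ∧ ∃ y : ℝ, 0 < y ∧ ψ x ≠ ψ y)
    (hlim : ∀ x : ℝ, 0 < x →
      Tendsto (fun t : ℝ => (b (t * x) - b t) / a t) atTop (nhds (ψ x))) :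
    ∃ ρ : ℝ, ∃ k : ℝ, k ≠ 0 ∧
      ((ρ ≠ 0 → ∀ x : ℝ, 0 < x → ψ x = k * ((x ^ ρ - 1) / ρ)) ∧
       (ρ = 0 → ∀ x : ℝ, 0 < x → ψ x = k * Real.log x)) :=
  stmt_8_general a b ha_meas hb_meas ha_pos ψ hψ_ne hlim
end

section
/- Let b : (0,∞) → ℝ be nondecreasing with b(t) → sup b as t → ∞, let a : (0,∞) → (0,∞), and let ρ ∈ ℝ. Suppose that for every x > 0, (b(tx) − b(t))/a(t) → ψ(x) as t → ∞, where ψ(x) = (x^ρ − 1)/ρ for ρ ≠ 0 and ψ(x) = log x for ρ = 0. Then for every y with 1 + ρy > 0, b^←(b(t) + y·a(t))/t → (1 + ρy)^{1/ρ} as t → ∞ (interpreted as e^y when ρ = 0), where b^←(x) = inf{s : b(s) ≥ x} is the left-continuous inverse of b. -/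
open Filter Set Topology

/-!
Write `ψ` for the limit function and `c = ψ^←(y)`, so that `ψ c = y`. Since `ψ` is strictly
increasing, for `0 < x < c < x'` the hypothesis gives, for large `t`,
`b (t x) < b t + y a t ≤ b (t x')`, and monotonicity of `b` traps the generalized inverse:
`t x ≤ b^←(b t + y a t) ≤ t x'`. Letting `x, x'` tend to `c` gives the claim.
-/

/-- The Box–Cox transform, i.e. the limit function `ψ` of extended regular variation. -/
noncomputable def boxCox (ρ x : ℝ) : ℝ :=
  if ρ = 0 then Real.log x else (x ^ ρ - 1) / ρ

noncomputable def boxCoxInv (ρ y : ℝ) : ℝ :=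
  if ρ = 0 then Real.exp y else (1 + ρ * y) ^ (1 / ρ)

theorem strictMonoOn_boxCox (ρ : ℝ) : StrictMonoOn (boxCox ρ) (Ioi 0) := by
  intro u (hu : 0 < u) v _ huv
  unfold boxCox
  rcases lt_trichotomy ρ 0 with hneg | rfl | hpos
  · simp only [hneg.ne, if_false]
    rw [div_lt_div_right_of_neg hneg]
    linarith [Real.rpow_lt_rpow_of_neg hu huv hneg]
  · simpa using Real.log_lt_log hu huv
  · simp only [hpos.ne', if_false]
    rw [div_lt_div_iff_of_pos_right hpos]
    linarith [Real.rpow_lt_rpow hu.le huv hpos]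

theorem boxCoxInv_pos {ρ y : ℝ} (hy : 0 < 1 + ρ * y) : 0 < boxCoxInv ρ y := by
  unfold boxCoxInv
  split
  · exact Real.exp_pos y
  · exact Real.rpow_pos_of_pos hy _

theorem boxCox_boxCoxInv {ρ y : ℝ} (hy : 0 < 1 + ρ * y) : boxCox ρ (boxCoxInv ρ y) = y := by
  unfold boxCox boxCoxInv
  by_cases hρ : ρ = 0
  · simp [hρ]
  · simp only [hρ, if_false]
    rw [← Real.rpow_mul hy.le, one_div_mul_cancel hρ, Real.rpow_one]
    field_simp
    ring

section GeneralizedInverse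

variable {α β : Type*} [ConditionallyCompleteLinearOrder α] [Preorder β]
  {b : α → β} {u w : α} {v : β}

theorem mem_lowerBounds_setOf_le_apply (hb : Monotone b) (hu : b u < v) :
    u ∈ lowerBounds {s | v ≤ b s} :=
  fun _ hs => (hb.reflect_lt (hu.trans_le hs)).le

theorem le_csInf_setOf_le_apply (hb : Monotone b) (hu : b u < v) (hw : v ≤ b w) :
    u ≤ sInf {s | v ≤ b s} :=
  le_csInf ⟨w, hw⟩ (mem_lowerBounds_setOf_le_apply hb hu)

theorem csInf_setOf_le_apply_le (hb : Monotone b) (hu : b u < v) (hw : v ≤ b w) :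
    sInf {s | v ≤ b s} ≤ w :=
  csInf_le ⟨u, mem_lowerBounds_setOf_le_apply hb hu⟩ hw

end GeneralizedInverse

theorem eventually_csInf_div_mem_Icc {b a : ℝ → ℝ} {x x' y p q : ℝ} (hb : Monotone b)
    (ha : ∀ t, 0 < t → 0 < a t)
    (hx : Tendsto (fun t => (b (t * x) - b t) / a t) atTop (𝓝 p))
    (hx' : Tendsto (fun t => (b (t * x') - b t) / a t) atTop (𝓝 q))
    (hpy : p < y) (hyq : y < q) :
    ∀ᶠ t in atTop, sInf {s | b t + y * a t ≤ b s} / t ∈ Icc x x' := by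
  filter_upwards [hx.eventually_lt_const hpy, hx'.eventually_const_lt hyq,
    eventually_gt_atTop 0] with t hlo hhi ht
  have hlo : b (t * x) < b t + y * a t := by
    linarith [(div_lt_iff₀ (ha t ht)).1 hlo]
  have hhi : b t + y * a t ≤ b (t * x') := by
    linarith [(lt_div_iff₀ (ha t ht)).1 hhi]
  rw [mem_Icc, le_div_iff₀ ht, div_le_iff₀ ht, mul_comm x, mul_comm x']
  exact ⟨le_csInf_setOf_le_apply hb hlo hhi, csInf_setOf_le_apply_le hb hlo hhi⟩

theorem tendsto_of_forall_eventually_mem_Icc {ι : Type*} {l : Filter ι} {f : ι → ℝ} {c : ℝ}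
    (hc : 0 < c) (h : ∀ x x', 0 < x → x < c → c < x' → ∀ᶠ i in l, f i ∈ Icc x x') :
    Tendsto f l (𝓝 c) := by
  rw [tendsto_order]
  constructor
  · intro m hm
    obtain ⟨x, hmx, hxc⟩ := exists_between (max_lt hm hc)
    filter_upwards [h x (c + 1) ((le_max_right m 0).trans_lt hmx) hxc (lt_add_one c)]
      with i hi
    exact ((le_max_left m 0).trans_lt hmx).trans_le hi.1
  · intro m hm
    obtain ⟨x', hcx', hx'm⟩ := exists_between hm
    filter_upwards [h (c / 2) x' (half_pos hc) (half_lt_self hc) hcx'] with i hi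
    exact hi.2.trans_lt hx'm

theorem stmt_9_general (b : ℝ → ℝ) (a : ℝ → ℝ) (ρ : ℝ)
    (hb_mono : Monotone b)
    (ha_pos : ∀ t : ℝ, 0 < t → 0 < a t)
    (hlim : ∀ x : ℝ, 0 < x →
      Tendsto (fun t : ℝ => (b (t * x) - b t) / a t) atTop
        (nhds (if ρ = 0 then Real.log x else (x ^ ρ - 1) / ρ))) :
    ∀ y : ℝ, 0 < 1 + ρ * y →
      Tendsto (fun t : ℝ => sInf {s : ℝ | b t + y * a t ≤ b s} / t) atTop
        (nhds (if ρ = 0 then Real.exp y else (1 + ρ * y) ^ (1 / ρ))) := by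
  intro y hy
  have hc : 0 < boxCoxInv ρ y := boxCoxInv_pos hy
  have hψc : boxCox ρ (boxCoxInv ρ y) = y := boxCox_boxCoxInv hy
  refine tendsto_of_forall_eventually_mem_Icc hc fun x x' hx hxc hcx' => ?_
  have hx' : 0 < x' := hc.trans hcx'
  exact eventually_csInf_div_mem_Icc hb_mono ha_pos (hlim x hx) (hlim x' hx')
    (hψc ▸ strictMonoOn_boxCox ρ hx hc hxc) (hψc ▸ strictMonoOn_boxCox ρ hc hx' hcx')

/-- Inverted form of extended regular variation: if `b` is nondecreasing with
`b(t) → sup b`, and `(b(tx) - b(t))/a(t) → ψ(x) = (x^ρ - 1)/ρ` (`= log x` when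
`ρ = 0`) for all `x > 0`, then for every `y` with `1 + ρ y > 0`,
`b^←(b(t) + y a(t))/t → (1 + ρ y)^{1/ρ}` (`= e^y` when `ρ = 0`), where
`b^←(x) = inf{s : b(s) ≥ x}`. -/
theorem stmt_9 (b : ℝ → ℝ) (a : ℝ → ℝ) (ρ : ℝ)
    (hb_mono : Monotone b)
    (hb_sup : Tendsto (fun t : ℝ => (b t : EReal)) atTop
      (nhds (⨆ t : ℝ, (b t : EReal))))
    (ha_pos : ∀ t : ℝ, 0 < t → 0 < a t)
    (hlim : ∀ x : ℝ, 0 < x →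
      Tendsto (fun t : ℝ => (b (t * x) - b t) / a t) atTop
        (nhds (if ρ = 0 then Real.log x else (x ^ ρ - 1) / ρ))) :
    ∀ y : ℝ, 0 < 1 + ρ * y →
      Tendsto (fun t : ℝ => sInf {s : ℝ | b t + y * a t ≤ b s} / t) atTop
        (nhds (if ρ = 0 then Real.exp y else (1 + ρ * y) ^ (1 / ρ))) :=
  stmt_9_general b a ρ hb_mono ha_pos hlim
end

section
/- Let Z = (Z^{(1)},…,Z^{(d)}) be a random vector with nonnegative components, α > 0, and let b, b⁰ : (0,∞) → (0,∞) satisfy b(t) → ∞, b⁰(t) → ∞ and b(t)/b⁰(t) → ∞. Assume: (i) for each i = 1,…,d and each x > 0, t·P[Z^{(i)} > b(t)·x] → x^{-α} as t → ∞; and (ii) for each pair 1 ≤ i < j ≤ d and each u > 0, limsup_{t→∞} t·P[Z^{(i)} > b⁰(t)·u, Z^{(j)} > b⁰(t)·u] < ∞. Then for every x = (x^{(1)},…,x^{(d)}) with all components positive, t·P[Z^{(i)} > b(t)·x^{(i)} for some i] → Σ_{i=1}^d (x^{(i)})^{-α} as t → ∞. -/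
/-!
The event is the union of the marginal exceedances `A i = {b t * x i < Z i}`, so by the Bonferroni
inequalities `t * P[⋃ A i]` lies between `∑ t * P[A i]` and that sum minus
`∑_{i ≠ j} t * P[A i ∩ A j]`; it remains to see that joint exceedances vanish at the scale `b`.
Marginal regular variation forces `b (λ t) = O(b t)` for every `λ`, and with `b / b⁰ → ∞` this gives
`b⁰ (λ t) ≤ m * b t` eventually. Hence, with `C` bounding `s * P[min (Z i) (Z j) > b⁰ s]` by (ii),
`t * P[min (Z i) (Z j) > m * b t] ≤ λ⁻¹ * (λ t) * P[min (Z i) (Z j) > b⁰ (λ t)] ≤ C / λ`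
for every `λ > 0`.
-/

open MeasureTheory ProbabilityTheory Filter Topology

theorem exists_eventually_toReal_le_of_limsup_lt_top {ι : Type*} {l : Filter ι}
    {u : ι → ENNReal} (h : limsup u l < ⊤) : ∃ C : ℝ, ∀ᶠ i in l, (u i).toReal ≤ C := by
  obtain ⟨c, hlc, hc⟩ := exists_between h
  exact ⟨c.toReal, (eventually_lt_of_limsup_lt hlc).mono fun i hi =>
    ENNReal.toReal_mono hc.ne hi.le⟩

section TailScaling

variable {F b b0 : ℝ → ℝ} {α : ℝ}

theorem exists_pos_eventually_apply_mul_lt_mul (hF : Antitone F) (hα : 0 < α)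
    (hb : ∀ x, 0 < x → Tendsto (fun t => t * F (b t * x)) atTop (𝓝 (x ^ (-α))))
    {lam : ℝ} (hlam : 0 < lam) : ∃ M > 0, ∀ᶠ t in atTop, b (lam * t) < M * b t := by
  -- If `b (lam * t) ≥ M * b t`, then `1 ≈ lam * t * F (b (lam * t)) ≤ lam * t * F (b t * M) ≈ 1/2`.
  set M := (2 * lam) ^ α⁻¹
  have hM : 0 < M := by positivity
  have hMα : lam * M ^ (-α) = 1 / 2 := by
    rw [Real.rpow_neg hM.le, Real.rpow_inv_rpow (by positivity) hα.ne']
    field_simp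
  have h1 : Tendsto (fun t => lam * t * F (b (lam * t) * 1)) atTop (𝓝 1) := by
    simpa only [Real.one_rpow, Function.comp_def, id] using
      (hb 1 one_pos).comp (tendsto_id.const_mul_atTop hlam)
  have h2 : Tendsto (fun t => lam * (t * F (b t * M))) atTop (𝓝 (1 / 2)) :=
    hMα ▸ (hb M hM).const_mul lam
  refine ⟨M, hM, ?_⟩
  filter_upwards [h1.eventually (eventually_gt_nhds (by norm_num : (3 / 4 : ℝ) < 1)),
    h2.eventually (eventually_lt_nhds (by norm_num : (1 / 2 : ℝ) < 3 / 4)),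
    eventually_ge_atTop 0] with t ht1 ht2 ht0
  by_contra! hle
  have hF_le : F (b (lam * t) * 1) ≤ F (b t * M) := hF (by linarith [mul_comm M (b t)])
  have hcompare : lam * t * F (b (lam * t) * 1) ≤ lam * (t * F (b t * M)) := by
    rw [mul_assoc]
    gcongr
  linarith

theorem eventually_le_mul_of_tendsto_div_atTop {ι : Type*} {l : Filter ι} {f g : ι → ℝ}
    (hg : ∀ᶠ i in l, 0 < g i) (hfg : Tendsto (fun i => f i / g i) l atTop) {η : ℝ}
    (hη : 0 < η) : ∀ᶠ i in l, g i ≤ η * f i := by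
  filter_upwards [hfg.eventually_ge_atTop η⁻¹, hg] with i hi hgi
  rw [le_div_iff₀ hgi] at hi
  calc g i = η * (η⁻¹ * g i) := by field_simp
    _ ≤ η * f i := by gcongr

theorem eventually_apply_mul_le_mul (hF : Antitone F) (hα : 0 < α)
    (hb : ∀ x, 0 < x → Tendsto (fun t => t * F (b t * x)) atTop (𝓝 (x ^ (-α))))
    (hb0 : ∀ᶠ t in atTop, 0 < b0 t) (hratio : Tendsto (fun t => b t / b0 t) atTop atTop)
    {lam m : ℝ} (hlam : 0 < lam) (hm : 0 < m) :
    ∀ᶠ t in atTop, b0 (lam * t) ≤ b t * m := by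
  obtain ⟨M, hM, hgrowth⟩ := exists_pos_eventually_apply_mul_lt_mul hF hα hb hlam
  have hsmall := (tendsto_id.const_mul_atTop hlam).eventually
    (eventually_le_mul_of_tendsto_div_atTop hb0 hratio (div_pos hm hM))
  filter_upwards [hgrowth, hsmall] with t hgt hst
  calc b0 (lam * t) ≤ m / M * b (lam * t) := hst
    _ ≤ m / M * (M * b t) := by gcongr
    _ = b t * m := by field_simp

theorem tendsto_mul_apply_mul_nhds_zero {G : ℝ → ℝ} (hG : Antitone G) (hG0 : ∀ c, 0 ≤ G c)
    {C m : ℝ} (hC : ∀ᶠ s in atTop, s * G (b0 s) ≤ C)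
    (hscale : ∀ lam > 0, ∀ᶠ t in atTop, b0 (lam * t) ≤ b t * m) :
    Tendsto (fun t => t * G (b t * m)) atTop (𝓝 0) := by
  refine tendsto_order.2 ⟨fun a ha => ?_, fun ε hε => ?_⟩
  · filter_upwards [eventually_ge_atTop 0] with t ht
    exact ha.trans_le (mul_nonneg ht (hG0 _))
  · set lam := (|C| + 1) / ε
    have hlam : 0 < lam := by positivity
    filter_upwards [(tendsto_id.const_mul_atTop hlam).eventually hC, hscale lam hlam,
      eventually_ge_atTop 0] with t hCt hle ht
    calc t * G (b t * m) ≤ t * G (b0 (lam * t)) := by gcongr; exact hG hle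
      _ = lam * t * G (b0 (lam * t)) / lam := by field_simp
      _ ≤ |C| / lam := by gcongr; exact hCt.trans (le_abs_self C)
      _ < ε := by
        rw [div_lt_iff₀ hlam, mul_div_cancel₀ _ hε.ne']
        linarith

end TailScaling

section Tails

variable {Ω : Type*} [MeasurableSpace Ω] (μ : Measure Ω) [IsFiniteMeasure μ]

theorem measureReal_sum_le_biUnion_add_sum_offDiag {ι : Type*} [DecidableEq ι] {A : ι → Set Ω}
    (hA : ∀ i, MeasurableSet (A i)) (s : Finset ι) :
    ∑ i ∈ s, μ.real (A i) ≤
      μ.real (⋃ i ∈ s, A i) + ∑ p ∈ s.offDiag, μ.real (A p.1 ∩ A p.2) := by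
  induction s using Finset.induction_on with
  | empty => simp
  | @insert a s ha ih =>
    have hinter : μ.real (A a ∩ ⋃ i ∈ s, A i) ≤ ∑ j ∈ s, μ.real (A a ∩ A j) := by
      rw [Set.inter_iUnion₂]
      exact measureReal_biUnion_finset_le s _
    have hpairs : ∑ p ∈ s.offDiag, μ.real (A p.1 ∩ A p.2) + ∑ j ∈ s, μ.real (A a ∩ A j) ≤
        ∑ p ∈ (insert a s).offDiag, μ.real (A p.1 ∩ A p.2) := by
      have hdisj : Disjoint s.offDiag ({a} ×ˢ s) :=
        Finset.disjoint_left.2 fun p hp hp' => by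
          simp only [Finset.mem_offDiag, Finset.mem_product, Finset.mem_singleton] at hp hp'
          exact ha (hp'.1 ▸ hp.1)
      calc _ = ∑ p ∈ s.offDiag ∪ {a} ×ˢ s, μ.real (A p.1 ∩ A p.2) := by
            rw [Finset.sum_union hdisj, Finset.sum_product, Finset.sum_singleton]
        _ ≤ _ := by
          rw [Finset.offDiag_insert ha]
          exact Finset.sum_le_sum_of_subset_of_nonneg Finset.subset_union_left
            fun _ _ _ => measureReal_nonneg
    have hunion := measureReal_union_add_inter (μ := μ) (s := A a)
      (Finset.measurableSet_biUnion s fun i _ => hA i) (measure_ne_top _ _) (measure_ne_top _ _)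
    rw [Finset.sum_insert ha, Finset.set_biUnion_insert]
    linarith

theorem antitone_measureReal_setOf_lt (Y : Ω → ℝ) : Antitone fun c => μ.real {ω | c < Y ω} :=
  fun _ _ h => measureReal_mono fun _ hω => h.trans_lt hω

theorem tendsto_mul_measureReal_inter_nhds_zero {Y W : Ω → ℝ} {α : ℝ} (hα : 0 < α)
    {b b0 : ℝ → ℝ} (hb_pos : ∀ t, 0 < t → 0 < b t) (hb0_pos : ∀ t, 0 < t → 0 < b0 t)
    (hratio : Tendsto (fun t => b t / b0 t) atTop atTop)
    (hY : ∀ x, 0 < x → Tendsto (fun t => t * μ.real {ω | b t * x < Y ω}) atTop (𝓝 (x ^ (-α))))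
    (hYW : limsup (fun t => ENNReal.ofReal t * μ {ω | b0 t < Y ω ∧ b0 t < W ω}) atTop < ⊤)
    {x y : ℝ} (hx : 0 < x) (hy : 0 < y) :
    Tendsto (fun t => t * μ.real ({ω | b t * x < Y ω} ∩ {ω | b t * y < W ω})) atTop (𝓝 0) := by
  have hmin : ∀ c, {ω | c < Y ω ∧ c < W ω} = {ω | c < min (Y ω) (W ω)} := fun c => by
    simp only [lt_min_iff]
  obtain ⟨C, hC⟩ := exists_eventually_toReal_le_of_limsup_lt_top hYW
  have hC' : ∀ᶠ s in atTop, s * μ.real {ω | b0 s < min (Y ω) (W ω)} ≤ C := by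
    filter_upwards [hC, eventually_ge_atTop 0] with s hs hs0
    rwa [ENNReal.toReal_mul, ENNReal.toReal_ofReal hs0, hmin] at hs
  have hscale : ∀ lam > 0, ∀ᶠ t in atTop, b0 (lam * t) ≤ b t * min x y := fun lam hlam =>
    eventually_apply_mul_le_mul (antitone_measureReal_setOf_lt μ Y) hα hY
      (eventually_gt_atTop 0 |>.mono hb0_pos) hratio hlam (lt_min hx hy)
  refine tendsto_of_tendsto_of_tendsto_of_le_of_le' tendsto_const_nhds
    (tendsto_mul_apply_mul_nhds_zero (antitone_measureReal_setOf_lt μ _)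
      (fun _ => measureReal_nonneg) hC' hscale) ?_ ?_
  · filter_upwards [eventually_ge_atTop 0] with t ht
    positivity
  · filter_upwards [eventually_gt_atTop 0] with t ht
    have hbt := (hb_pos t ht).le
    refine mul_le_mul_of_nonneg_left (measureReal_mono fun ω ⟨hωY, hωW⟩ => ?_) ht.le
    exact lt_min ((mul_le_mul_of_nonneg_left (min_le_left x y) hbt).trans_lt hωY)
      ((mul_le_mul_of_nonneg_left (min_le_right x y) hbt).trans_lt hωW)

theorem tendsto_mul_measureReal_iUnion {ι : Type*} [Fintype ι] {A : ℝ → ι → Set Ω}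
    (hA : ∀ t i, MeasurableSet (A t i)) {a : ι → ℝ}
    (hmarg : ∀ i, Tendsto (fun t => t * μ.real (A t i)) atTop (𝓝 (a i)))
    (hinter : ∀ i j, i ≠ j → Tendsto (fun t => t * μ.real (A t i ∩ A t j)) atTop (𝓝 0)) :
    Tendsto (fun t => t * μ.real (⋃ i, A t i)) atTop (𝓝 (∑ i, a i)) := by
  classical
  have hsum : Tendsto (fun t => ∑ i, t * μ.real (A t i)) atTop (𝓝 (∑ i, a i)) :=
    tendsto_finsetSum _ fun i _ => hmarg i
  have hpairs : Tendsto (fun t => ∑ p ∈ Finset.univ.offDiag, t * μ.real (A t p.1 ∩ A t p.2))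
      atTop (𝓝 0) := by
    rw [← Finset.sum_const_zero (s := (Finset.univ : Finset ι).offDiag)]
    exact tendsto_finsetSum _ fun p hp => hinter p.1 p.2 (Finset.mem_offDiag.1 hp).2.2
  have hunion : ∀ t, ⋃ i, A t i = ⋃ i ∈ Finset.univ, A t i := fun t => by simp
  refine tendsto_of_tendsto_of_tendsto_of_le_of_le' (by simpa using hsum.sub hpairs) hsum ?_ ?_
  · filter_upwards [eventually_ge_atTop 0] with t ht
    have := mul_le_mul_of_nonneg_left
      (measureReal_sum_le_biUnion_add_sum_offDiag μ (hA t) Finset.univ) ht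
    rw [hunion, ← Finset.mul_sum, ← Finset.mul_sum]
    linarith [mul_add t (μ.real (⋃ i ∈ Finset.univ, A t i))
      (∑ p ∈ Finset.univ.offDiag, μ.real (A t p.1 ∩ A t p.2))]
  · filter_upwards [eventually_ge_atTop 0] with t ht
    rw [hunion, ← Finset.mul_sum]
    exact mul_le_mul_of_nonneg_left (measureReal_biUnion_finset_le _ _) ht

end Tails

theorem stmt_13_general {Ω : Type*} [MeasureSpace Ω] [IsProbabilityMeasure (ℙ : Measure Ω)]
    {d : ℕ} (Z : Fin d → Ω → ℝ) (hZm : ∀ i, Measurable (Z i))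
    (α : ℝ) (hα : 0 < α)
    (b b0 : ℝ → ℝ) (hb_pos : ∀ t : ℝ, 0 < t → 0 < b t)
    (hb0_pos : ∀ t : ℝ, 0 < t → 0 < b0 t)
    (hratio : Tendsto (fun t => b t / b0 t) atTop atTop)
    (hmarg : ∀ i, ∀ x : ℝ, 0 < x →
      Tendsto (fun t : ℝ => t * (ℙ {ω | b t * x < Z i ω}).toReal) atTop
        (nhds (x ^ (-α))))
    (hpair : ∀ i j : Fin d, i < j → ∀ u : ℝ, 0 < u →
      Filter.limsup
        (fun t : ℝ => ENNReal.ofReal t *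
          ℙ {ω | b0 t * u < Z i ω ∧ b0 t * u < Z j ω}) atTop < ⊤) :
    ∀ x : Fin d → ℝ, (∀ i, 0 < x i) →
      Tendsto (fun t : ℝ => t * (ℙ {ω | ∃ i, b t * x i < Z i ω}).toReal) atTop
        (nhds (∑ i, (x i) ^ (-α))) := by
  intro x hx
  have hpair_ne : ∀ i j, i ≠ j →
      limsup (fun t => ENNReal.ofReal t * ℙ {ω | b0 t < Z i ω ∧ b0 t < Z j ω}) atTop < ⊤ := by
    intro i j hij
    rcases hij.lt_or_gt with h | h
    · simpa only [mul_one] using hpair i j h 1 one_pos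
    · simpa only [mul_one, and_comm] using hpair j i h 1 one_pos
  simp only [Set.ofPred_exists]
  exact tendsto_mul_measureReal_iUnion ℙ
    (fun t i => measurableSet_lt measurable_const (hZm i)) (fun i => hmarg i (x i) (hx i))
    fun i j hij => tendsto_mul_measureReal_inter_nhds_zero ℙ hα hb_pos hb0_pos hratio
      (hmarg i) (hpair_ne i j hij) (hx i) (hx j)

/-- Marginal regular variation with scaling `b` plus finiteness (Radon property) of
joint pairwise tail limsups under the hidden scaling `b⁰` (with `b/b⁰ → ∞`) implies
multivariate regular variation on `[0,∞]^d \ {0}` with limit measure concentrating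
on the axes: `t·P[Z⁽ⁱ⁾ > b(t)x⁽ⁱ⁾ for some i] → Σ_i (x⁽ⁱ⁾)^{-α}`. -/
theorem stmt_13 {Ω : Type*} [MeasureSpace Ω] [IsProbabilityMeasure (ℙ : Measure Ω)]
    {d : ℕ} (Z : Fin d → Ω → ℝ) (hZm : ∀ i, Measurable (Z i))
    (hZ0 : ∀ i ω, 0 ≤ Z i ω)
    (α : ℝ) (hα : 0 < α)
    (b b0 : ℝ → ℝ) (hb_pos : ∀ t : ℝ, 0 < t → 0 < b t)
    (hb0_pos : ∀ t : ℝ, 0 < t → 0 < b0 t)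
    (hb_top : Tendsto b atTop atTop) (hb0_top : Tendsto b0 atTop atTop)
    (hratio : Tendsto (fun t => b t / b0 t) atTop atTop)
    (hmarg : ∀ i, ∀ x : ℝ, 0 < x →
      Tendsto (fun t : ℝ => t * (ℙ {ω | b t * x < Z i ω}).toReal) atTop
        (nhds (x ^ (-α))))
    (hpair : ∀ i j : Fin d, i < j → ∀ u : ℝ, 0 < u →
      Filter.limsup
        (fun t : ℝ => ENNReal.ofReal t *
          ℙ {ω | b0 t * u < Z i ω ∧ b0 t * u < Z j ω}) atTop < ⊤) :
    ∀ x : Fin d → ℝ, (∀ i, 0 < x i) →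
      Tendsto (fun t : ℝ => t * (ℙ {ω | ∃ i, b t * x i < Z i ω}).toReal) atTop
        (nhds (∑ i, (x i) ^ (-α))) :=
  stmt_13_general Z hZm α hα b b0 hb_pos hb0_pos hratio hmarg hpair
end

section
/- Let (X, Y*) be an ℝ × (0,∞)-valued random vector, let α : (0,∞) → (0,∞) and β : (0,∞) → ℝ, and let F : ℝ × (0,∞) → [0,∞). Assume: (i) for every y > 0 and every x that is a continuity point of u ↦ F(u, y), t·P[(X − β(t))/α(t) ≤ x, Y* > t·y] → F(x, y) as t → ∞; (ii) for each y > 0 the function x ↦ F(x, y) is nondecreasing with more than one point of increase (nondegenerate); (iii) t·P[Y* > t] → 1 and lim_{x→∞} F(x, 1) = 1 (so H(x) := F(x,1) is a probability distribution function). Then for every c > 0 the limits ψ₁(c) = lim_{t→∞} α(tc)/α(t) ∈ (0,∞) and ψ₂(c) = lim_{t→∞} (β(tc) − β(t))/α(t) ∈ ℝ exist, and for every c > 0 and every continuity point x of the relevant functions, (1/c)·F(x, 1/c) = H(ψ₁(c)·x + ψ₂(c)). -/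
open MeasureTheory ProbabilityTheory Filter

/-- A point of increase of a function `G : ℝ → ℝ`. -/
def IsPointOfIncrease (G : ℝ → ℝ) (x : ℝ) : Prop :=
  ∀ ε : ℝ, 0 < ε → G (x - ε) < G (x + ε)

/-!
Write `V t u = t · P[X ≤ u, Y* > t]`. Along the normalization `(α t, β t)` the monotone functions
`V t` converge to `H = F(·, 1)`, and along `(α (tc), β (tc))` to `W_c = (1/c) · F(·, 1/c)`.
Because `{Y* > tc} ⊆ {Y* > t}` and `t · P[t < Y* ≤ tc] → 1 - 1/c`, one has
`H/c ≤ W_c ≤ H/c + (1 - 1/c)`; for `c` close to `1` this makes the values of `H` and `W_c`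
interlace, which is the nondegeneracy a convergence-of-types argument needs. The affine ratios
`(α (tc)/α t, (β (tc) - β t)/α t)` then stay in a compact set, every cluster point `(a, b)` has
`a > 0` and satisfies `W_c = H(a · + b)`, and it is unique because a monotone function with two
points of increase is invariant, off a countable set, under no increasing affine map but the
identity. So `ψ₁(c), ψ₂(c)` exist for `c` near `1`; the limits compose under `c ↦ cd` and
`c ↦ c⁻¹`, hence exist for every `c > 0`, and the identity follows at continuity points.
-/

open Set Topology

section Cocountable

variable {α β : Type*}

instance countableInterFilter_cocountable : CountableInterFilter (cocountable : Filter α) :=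
  ⟨fun S hS hmem => mem_cocountable.2 <| by
    rw [compl_sInter]
    exact (hS.image _).sUnion (by rintro _ ⟨s, hs, rfl⟩; exact mem_cocountable.1 (hmem s hs))⟩

theorem Function.Injective.tendsto_cocountable {f : α → β} (hf : f.Injective) :
    Tendsto f cocountable cocountable := fun s hs =>
  mem_cocountable.2 <| by rw [← preimage_compl]; exact (mem_cocountable.1 hs).preimage hf

theorem Monotone.eventually_continuousAt {U : ℝ → ℝ} (hU : Monotone U) :
    ∀ᶠ x in cocountable, ContinuousAt U x :=
  mem_cocountable.2 <| by simpa only [compl_ofPred] using hU.countable_not_continuousAt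

variable {P Q : ℝ → Prop}

theorem exists_mem_Ioo_of_cocountable (hP : ∀ᶠ x in cocountable, P x) {a b : ℝ} (hab : a < b) :
    ∃ x ∈ Ioo a b, P x := by
  by_contra! h
  have : (Ioo a b).Countable := (mem_cocountable.1 hP).mono fun x hx => h x hx
  exact (Cardinal.Real.Ioo_countable_iff.1 this).not_gt hab

theorem exists_lt_of_nhds_of_cocountable {a : ℝ} (hP : ∀ᶠ x in 𝓝 a, P x)
    (hQ : ∀ᶠ x in cocountable, Q x) : ∃ x < a, P x ∧ Q x := by
  obtain ⟨l, hl, hsub⟩ := exists_Ioc_subset_of_mem_nhds hP (exists_lt a)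
  obtain ⟨x, hx, hQx⟩ := exists_mem_Ioo_of_cocountable hQ hl
  exact ⟨x, hx.2, hsub (Ioo_subset_Ioc_self hx), hQx⟩

theorem exists_gt_of_nhds_of_cocountable {a : ℝ} (hP : ∀ᶠ x in 𝓝 a, P x)
    (hQ : ∀ᶠ x in cocountable, Q x) : ∃ x > a, P x ∧ Q x := by
  obtain ⟨u, hu, hsub⟩ := exists_Ico_subset_of_mem_nhds hP (exists_gt a)
  obtain ⟨x, hx, hQx⟩ := exists_mem_Ioo_of_cocountable hQ hu
  exact ⟨x, hx.1, hsub (Ioo_subset_Ico_self hx), hQx⟩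

theorem exists_of_atTop_of_cocountable (hP : ∀ᶠ x in atTop, P x)
    (hQ : ∀ᶠ x in cocountable, Q x) : ∃ x, P x ∧ Q x := by
  obtain ⟨N, hN⟩ := eventually_atTop.1 hP
  obtain ⟨x, hx, hQx⟩ := exists_mem_Ioo_of_cocountable hQ (lt_add_one N)
  exact ⟨x, hN x hx.1.le, hQx⟩

end Cocountable

section Rigidity

variable {U : ℝ → ℝ}

theorem IsPointOfIncrease.exists_ne_of_mem_nhds {p : ℝ} {s : Set ℝ} (hp : IsPointOfIncrease U p)
    (hs : s ∈ 𝓝 p) : ∃ u ∈ s, ∃ v ∈ s, U u ≠ U v := by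
  obtain ⟨ε, hε, hball⟩ := Metric.mem_nhds_iff.1 hs
  refine ⟨p - ε / 2, hball ?_, p + ε / 2, hball ?_, (hp (ε / 2) (half_pos hε)).ne⟩ <;>
    simp [abs_of_pos hε, hε]

theorem Monotone.eq_of_eventually_add_eq (hU : Monotone U) {δ : ℝ} (hδ : δ ≠ 0)
    (h : ∀ᶠ x in cocountable, U (x + δ) = U x) (x y : ℝ) : U x = U y := by
  have hstep : ∀ᶠ z in cocountable, ∀ k : ℤ, U (z + k * δ + δ) = U (z + k * δ) :=
    eventually_countable_forall.2 fun k =>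
      (add_left_injective (k * δ)).tendsto_cocountable.eventually h
  obtain ⟨z, -, hz⟩ := exists_mem_Ioo_of_cocountable hstep zero_lt_one
  have hperiod : ∀ n : ℤ, U (z + n * δ) = U z := by
    intro n
    induction n using Int.induction_on with
    | zero => simp
    | succ k ih =>
      rw [← ih, ← hz k]
      congr 1
      push_cast
      ring
    | pred k ih =>
      rw [← ih, ← hz (-k - 1)]
      congr 1
      push_cast
      ring
  have hperiod' : ∀ n : ℤ, U (z + n * |δ|) = U z := by
    intro n
    rcases abs_choice δ with h | h <;> rw [h]
    · exact hperiod n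
    · simpa using hperiod (-n)
  have hd : 0 < |δ| := abs_pos.2 hδ
  suffices ∀ x, U x = U z from (this x).trans (this y).symm
  intro x
  obtain ⟨m, hm⟩ := exists_int_lt ((x - z) / |δ|)
  obtain ⟨n, hn⟩ := exists_int_gt ((x - z) / |δ|)
  rw [lt_div_iff₀ hd] at hm
  rw [div_lt_iff₀ hd] at hn
  refine le_antisymm ?_ ?_
  · exact (hU (by linarith : x ≤ z + n * |δ|)).trans (hperiod' n).le
  · exact (hperiod' m).ge.trans (hU (by linarith))

theorem Monotone.eq_of_eventually_eq_homothety_of_lt (hU : Monotone U) {c r : ℝ} (hr : 0 < r)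
    (hr1 : r ≠ 1) (h : ∀ᶠ y in cocountable, U (c + r * (y - c)) = U y) {u v : ℝ} (hu : c < u)
    (hv : c < v) : U u = U v := by
  -- in the coordinate `s = log (y - c)` the homothety becomes the translation by `log r`
  set g : ℝ → ℝ := fun s => U (c + Real.exp s)
  have hg : Monotone g := fun s t hst => hU (by gcongr)
  have hinj : (fun s => c + Real.exp s).Injective := (add_right_injective c).comp Real.exp_injective
  have hshift : ∀ᶠ s in cocountable, g (s + Real.log r) = g s :=
    (hinj.tendsto_cocountable.eventually h).mono fun s hs => by
      simp only [g, Real.exp_add, Real.exp_log hr] at hs ⊢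
      rw [← hs]
      ring_nf
  have hlog : ∀ w, c < w → U w = g (Real.log (w - c)) := fun w hw => by
    simp [g, Real.exp_log (sub_pos.2 hw)]
  rw [hlog u hu, hlog v hv,
    hg.eq_of_eventually_add_eq (Real.log_ne_zero_of_pos_of_ne_one hr hr1) hshift]

theorem Monotone.eq_of_eventually_eq_homothety_of_gt (hU : Monotone U) {c r : ℝ} (hr : 0 < r)
    (hr1 : r ≠ 1) (h : ∀ᶠ y in cocountable, U (c + r * (y - c)) = U y) {u v : ℝ} (hu : u < c)
    (hv : v < c) : U u = U v := by
  have hU' : Monotone fun x => -U (-x) := (hU.comp_antitone fun _ _ h => neg_le_neg h).neg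
  have h' : ∀ᶠ y in cocountable, -U (-(-c + r * (y - -c))) = -U (-y) :=
    (neg_injective.tendsto_cocountable.eventually h).mono fun y hy => by
      rw [← hy]
      ring_nf
  simpa using hU'.eq_of_eventually_eq_homothety_of_lt hr hr1 h' (neg_lt_neg hu) (neg_lt_neg hv)

theorem Monotone.eq_one_and_eq_zero_of_eventually_eq_affine (hU : Monotone U) {p q : ℝ}
    (hpq : p ≠ q) (hp : IsPointOfIncrease U p) (hq : IsPointOfIncrease U q) {r μ : ℝ} (hr : 0 < r)
    (h : ∀ᶠ y in cocountable, U (r * y + μ) = U y) : r = 1 ∧ μ = 0 := by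
  by_cases hr1 : r = 1
  · refine ⟨hr1, ?_⟩
    by_contra hμ
    have hconst := hU.eq_of_eventually_add_eq hμ <| h.mono fun y hy => by
      rwa [hr1, one_mul] at hy
    obtain ⟨u, -, v, -, hne⟩ := hp.exists_ne_of_mem_nhds univ_mem
    exact hne (hconst u v)
  · -- `y ↦ r * y + μ` is a homothety centred at its fixed point `c`
    set c := μ / (1 - r)
    have hfix : ∀ᶠ y in cocountable, U (c + r * (y - c)) = U y := h.mono fun y hy => by
      convert hy using 2
      simp only [c]
      field_simp [sub_ne_zero.2 (Ne.symm hr1)]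
      ring
    have hinc : ∀ x, IsPointOfIncrease U x → x = c := by
      intro x hx
      by_contra hxc
      rcases lt_or_gt_of_ne hxc with hlt | hlt
      · obtain ⟨u, hu, v, hv, hne⟩ := hx.exists_ne_of_mem_nhds (Iio_mem_nhds hlt)
        exact hne (hU.eq_of_eventually_eq_homothety_of_gt hr hr1 hfix hu hv)
      · obtain ⟨u, hu, v, hv, hne⟩ := hx.exists_ne_of_mem_nhds (Ioi_mem_nhds hlt)
        exact hne (hU.eq_of_eventually_eq_homothety_of_lt hr hr1 hfix hu hv)
    exact absurd ((hinc p hp).trans (hinc q hq).symm) hpq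

theorem Monotone.eq_of_eventually_comp_affine_eq (hU : Monotone U) {p q : ℝ} (hpq : p ≠ q)
    (hp : IsPointOfIncrease U p) (hq : IsPointOfIncrease U q) {a b a' b' : ℝ} (ha : 0 < a)
    (ha' : 0 < a') (h : ∀ᶠ x in cocountable, U (a * x + b) = U (a' * x + b')) :
    a = a' ∧ b = b' := by
  have hinj : (fun y => (y - b) / a).Injective := fun y z hyz => by
    simpa only [div_left_inj' ha.ne', sub_left_inj] using hyz
  have h' : ∀ᶠ y in cocountable, U (a' / a * y + (b' - a' / a * b)) = U y :=
    (hinj.tendsto_cocountable.eventually h).mono fun y hy => by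
      convert hy.symm using 2 <;> field_simp <;> ring
  obtain ⟨hr, hμ⟩ := hU.eq_one_and_eq_zero_of_eventually_eq_affine hpq hp hq (div_pos ha' ha) h'
  have haa' : a = a' := ((div_eq_one_iff_eq ha.ne').1 hr).symm
  refine ⟨haa', ?_⟩
  rw [hr, one_mul, sub_eq_zero] at hμ
  exact hμ.symm

end Rigidity

def Straddles (W U : ℝ → ℝ) : Prop :=
  ∃ w₁ w₂ u, ContinuousAt W w₁ ∧ ContinuousAt W w₂ ∧ ContinuousAt U u ∧ W w₁ < U u ∧ U u < W w₂

section ConvergenceOfTypes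

variable {ι : Type*} {l : Filter ι} {G : ι → ℝ → ℝ} {U W : ℝ → ℝ} {A B : ι → ℝ}

theorem tendsto_apply_of_tendsto (hG : ∀ᶠ i in l, Monotone (G i)) (hU : Monotone U)
    (hGU : ∀ x, ContinuousAt U x → Tendsto (fun i => G i x) l (𝓝 (U x))) {y : ι → ℝ} {z : ℝ}
    (hy : Tendsto y l (𝓝 z)) (hz : ContinuousAt U z) :
    Tendsto (fun i => G i (y i)) l (𝓝 (U z)) := by
  refine tendsto_order.2 ⟨fun m hm => ?_, fun m hm => ?_⟩
  · obtain ⟨v, hvz, hmv, hv⟩ :=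
      exists_lt_of_nhds_of_cocountable (hz.eventually (lt_mem_nhds hm)) hU.eventually_continuousAt
    filter_upwards [hG, (hGU v hv).eventually (lt_mem_nhds hmv), hy.eventually (lt_mem_nhds hvz)]
      with i hGi hi hyi
    exact hi.trans_le (hGi hyi.le)
  · obtain ⟨v, hvz, hmv, hv⟩ :=
      exists_gt_of_nhds_of_cocountable (hz.eventually (gt_mem_nhds hm)) hU.eventually_continuousAt
    filter_upwards [hG, (hGU v hv).eventually (gt_mem_nhds hmv), hy.eventually (gt_mem_nhds hvz)]
      with i hGi hi hyi
    exact (hGi hyi.le).trans_lt hi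

theorem apply_eq_of_tendsto [l.NeBot] (hG : ∀ᶠ i in l, Monotone (G i)) (hU : Monotone U)
    (hGU : ∀ x, ContinuousAt U x → Tendsto (fun i => G i x) l (𝓝 (U x))) {A₀ B₀ x L : ℝ}
    (hL : Tendsto (fun i => G i (A i * x + B i)) l (𝓝 L)) (hA : Tendsto A l (𝓝 A₀))
    (hB : Tendsto B l (𝓝 B₀)) (hz : ContinuousAt U (A₀ * x + B₀)) : L = U (A₀ * x + B₀) :=
  tendsto_nhds_unique hL (tendsto_apply_of_tendsto hG hU hGU ((hA.mul_const x).add hB) hz)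

theorem eventually_lt_of_tendsto_apply (hG : ∀ᶠ i in l, Monotone (G i)) {y₁ y₂ : ι → ℝ}
    {L₁ L₂ : ℝ} (h₁ : Tendsto (fun i => G i (y₁ i)) l (𝓝 L₁))
    (h₂ : Tendsto (fun i => G i (y₂ i)) l (𝓝 L₂)) (hL : L₁ < L₂) : ∀ᶠ i in l, y₁ i < y₂ i := by
  filter_upwards [hG, h₁.eventually_lt h₂ hL] with i hGi hi using hGi.reflect_lt hi

theorem exists_isCompact_eventually_mem (hG : ∀ᶠ i in l, Monotone (G i)) (hW : Monotone W)
    (hGU : ∀ x, ContinuousAt U x → Tendsto (fun i => G i x) l (𝓝 (U x)))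
    (hGW : ∀ x, ContinuousAt W x → Tendsto (fun i => G i (A i * x + B i)) l (𝓝 (W x)))
    (hA : ∀ᶠ i in l, 0 ≤ A i) (hUW : Straddles U W) :
    ∃ K : Set (ℝ × ℝ), IsCompact K ∧ ∀ᶠ i in l, (A i, B i) ∈ K := by
  obtain ⟨u₁, u₂, w₁, hu₁, hu₂, hw₁, h₁, h₂⟩ := hUW
  obtain ⟨w₂, hw, h₂', hw₂⟩ :=
    exists_gt_of_nhds_of_cocountable (hw₁.eventually (gt_mem_nhds h₂)) hW.eventually_continuousAt
  have hlo := eventually_lt_of_tendsto_apply (y₁ := fun _ => u₁) hG (hGU u₁ hu₁) (hGW w₁ hw₁) h₁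
  have hhi := eventually_lt_of_tendsto_apply (y₂ := fun _ => u₂) hG (hGW w₂ hw₂) (hGU u₂ hu₂) h₂'
  set M := (u₂ - u₁) / (w₂ - w₁)
  refine ⟨Icc 0 M ×ˢ Icc (u₁ - M * |w₁|) (u₂ + M * |w₂|), isCompact_Icc.prod isCompact_Icc, ?_⟩
  filter_upwards [hA, hlo, hhi] with i h0 hlo hhi
  have hM : A i ≤ M := by
    rw [le_div_iff₀ (sub_pos.2 hw)]
    linarith
  have e₁ : A i * w₁ ≤ M * |w₁| :=
    (mul_le_mul_of_nonneg_left (le_abs_self w₁) h0).trans (by gcongr)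
  have e₂ : -(M * |w₂|) ≤ A i * w₂ := by
    have : A i * |w₂| ≤ M * |w₂| := by gcongr
    nlinarith [neg_abs_le w₂]
  exact ⟨⟨h0, hM⟩, by linarith, by linarith⟩

theorem ne_zero_of_tendsto [l.NeBot] (hG : ∀ᶠ i in l, Monotone (G i)) (hU : Monotone U)
    (hGU : ∀ x, ContinuousAt U x → Tendsto (fun i => G i x) l (𝓝 (U x)))
    (hGW : ∀ x, ContinuousAt W x → Tendsto (fun i => G i (A i * x + B i)) l (𝓝 (W x)))
    (hWU : Straddles W U) {A₀ B₀ : ℝ} (hA : Tendsto A l (𝓝 A₀)) (hB : Tendsto B l (𝓝 B₀)) :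
    A₀ ≠ 0 := by
  -- if `A → 0`, every argument `A i * w + B i` tends to `B₀`, so no continuity value `U v` with
  -- `v ≠ B₀` can lie strictly between two values of `W`
  rintro rfl
  obtain ⟨w₁, w₂, u, hw₁, hw₂, hu, h₁, h₂⟩ := hWU
  have hy : ∀ w, Tendsto (fun i => A i * w + B i) l (𝓝 B₀) := fun w => by
    simpa using (hA.mul_const w).add hB
  obtain ⟨v, -, ⟨h₁v, hv₂⟩, hv, hvB⟩ := exists_lt_of_nhds_of_cocountable
    (hu.eventually ((lt_mem_nhds h₁).and (gt_mem_nhds h₂)))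
    (hU.eventually_continuousAt.and (eventually_cocardinal_ne B₀))
  rcases hvB.lt_or_gt with hvB | hvB
  · obtain ⟨i, hi₁, hi₂⟩ := ((hy w₁).eventually (lt_mem_nhds hvB)).and
      (eventually_lt_of_tendsto_apply (y₂ := fun _ => v) hG (hGW w₁ hw₁) (hGU v hv) h₁v) |>.exists
    exact lt_asymm hi₁ hi₂
  · obtain ⟨i, hi₁, hi₂⟩ := ((hy w₂).eventually (gt_mem_nhds hvB)).and
      (eventually_lt_of_tendsto_apply (y₁ := fun _ => v) hG (hGU v hv) (hGW w₂ hw₂) hv₂) |>.exists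
    exact lt_asymm hi₁ hi₂

theorem pos_and_eq_of_mapClusterPt (hG : ∀ᶠ i in l, Monotone (G i)) (hU : Monotone U)
    (hGU : ∀ x, ContinuousAt U x → Tendsto (fun i => G i x) l (𝓝 (U x)))
    (hGW : ∀ x, ContinuousAt W x → Tendsto (fun i => G i (A i * x + B i)) l (𝓝 (W x)))
    (hA : ∀ᶠ i in l, 0 ≤ A i) (hWU : Straddles W U) {p : ℝ × ℝ}
    (hp : MapClusterPt p l fun i => (A i, B i)) :
    0 < p.1 ∧ ∀ x, ContinuousAt W x → ContinuousAt U (p.1 * x + p.2) → W x = U (p.1 * x + p.2) := by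
  obtain ⟨𝒰, h𝒰, hp⟩ := mapClusterPt_iff_ultrafilter.1 hp
  have hG' := hG.filter_mono h𝒰
  have hGU' x hx := (hGU x hx).mono_left h𝒰
  have hGW' x hx := (hGW x hx).mono_left h𝒰
  have hA₀ : Tendsto A 𝒰 (𝓝 p.1) := hp.fst_nhds
  have hB₀ : Tendsto B 𝒰 (𝓝 p.2) := hp.snd_nhds
  refine ⟨(ge_of_tendsto hA₀ (hA.filter_mono h𝒰)).lt_of_ne' ?_, fun x hx hz => ?_⟩
  · exact ne_zero_of_tendsto hG' hU hGU' hGW' hWU hA₀ hB₀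
  · exact apply_eq_of_tendsto hG' hU hGU' (hGW' x hx) hA₀ hB₀ hz

/-- Convergence of types, without assuming that the `G i` are distribution functions. -/
theorem exists_tendsto_of_tendsto_monotone [l.NeBot] (hG : ∀ᶠ i in l, Monotone (G i))
    (hU : Monotone U) (hW : Monotone W)
    (hGU : ∀ x, ContinuousAt U x → Tendsto (fun i => G i x) l (𝓝 (U x)))
    (hGW : ∀ x, ContinuousAt W x → Tendsto (fun i => G i (A i * x + B i)) l (𝓝 (W x)))
    (hA : ∀ᶠ i in l, 0 ≤ A i) (hUW : Straddles U W) (hWU : Straddles W U) {p q : ℝ}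
    (hpq : p ≠ q) (hp : IsPointOfIncrease U p) (hq : IsPointOfIncrease U q) :
    ∃ A₀ B₀ : ℝ, 0 < A₀ ∧ Tendsto A l (𝓝 A₀) ∧ Tendsto B l (𝓝 B₀) := by
  obtain ⟨K, hK, hAB⟩ := exists_isCompact_eventually_mem hG hW hGU hGW hA hUW
  have hclus r (hr : MapClusterPt r l fun i => (A i, B i)) :=
    pos_and_eq_of_mapClusterPt hG hU hGU hGW hA hWU hr
  obtain ⟨r, -, hr⟩ := hK.exists_mapClusterPt (le_principal_iff.2 hAB)
  have hcomp (s : ℝ × ℝ) (hs : 0 < s.1) : ∀ᶠ x in cocountable, ContinuousAt U (s.1 * x + s.2) :=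
    ((add_left_injective s.2).comp (mul_right_injective₀ hs.ne')).tendsto_cocountable.eventually
      hU.eventually_continuousAt
  have huniq : ∀ r' ∈ K, MapClusterPt r' l (fun i => (A i, B i)) → r' = r := by
    intro r' _ hr'
    refine Prod.ext_iff.2 (hU.eq_of_eventually_comp_affine_eq hpq hp hq (hclus r' hr').1
      (hclus r hr).1 ?_)
    filter_upwards [hW.eventually_continuousAt, hcomp r' (hclus r' hr').1, hcomp r (hclus r hr).1]
      with x hx h₁ h₂
    exact ((hclus r' hr').2 x hx h₁).symm.trans ((hclus r hr).2 x hx h₂)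
  have hlim := hK.tendsto_nhds_of_unique_mapClusterPt hAB huniq
  exact ⟨r.1, r.2, (hclus r hr).1, hlim.fst_nhds, hlim.snd_nhds⟩

end ConvergenceOfTypes

section ScalingLimit

variable {α β : ℝ → ℝ}

def HasScalingLimit (α β : ℝ → ℝ) (c : ℝ) : Prop :=
  ∃ ψ₁ ψ₂ : ℝ, 0 < ψ₁ ∧ Tendsto (fun t => α (t * c) / α t) atTop (𝓝 ψ₁) ∧
    Tendsto (fun t => (β (t * c) - β t) / α t) atTop (𝓝 ψ₂)

theorem hasScalingLimit_one (hα : ∀ᶠ t in atTop, α t ≠ 0) : HasScalingLimit α β 1 :=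
  ⟨1, 0, one_pos, tendsto_const_nhds.congr' (hα.mono fun t ht => by simp [ht]), by simp⟩

theorem HasScalingLimit.mul (hα : ∀ᶠ t in atTop, α t ≠ 0) {c d : ℝ} (hc : HasScalingLimit α β c)
    (hd : HasScalingLimit α β d) (hd0 : 0 < d) : HasScalingLimit α β (c * d) := by
  obtain ⟨A₁, B₁, hA₁, hAc, hBc⟩ := hc
  obtain ⟨A₂, B₂, hA₂, hAd, hBd⟩ := hd
  have hmul : Tendsto (· * d) atTop atTop := tendsto_id.atTop_mul_const hd0
  have hα' : ∀ᶠ t in atTop, α t ≠ 0 ∧ α (t * d) ≠ 0 := hα.and (hmul.eventually hα)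
  refine ⟨A₁ * A₂, B₁ * A₂ + B₂, mul_pos hA₁ hA₂, ((hAc.comp hmul).mul hAd).congr' ?_,
    (((hBc.comp hmul).mul hAd).add hBd).congr' ?_⟩ <;>
  filter_upwards [hα'] with t ⟨h₁, h₂⟩ <;>
  simp only [Function.comp, show t * (c * d) = t * d * c by ring] <;>
  field_simp
  ring

theorem HasScalingLimit.inv (hα : ∀ᶠ t in atTop, α t ≠ 0) {c : ℝ} (hc : HasScalingLimit α β c)
    (hc0 : 0 < c) : HasScalingLimit α β c⁻¹ := by
  obtain ⟨A, B, hA, hAc, hBc⟩ := hc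
  have hmul : Tendsto (· * c⁻¹) atTop atTop := tendsto_id.atTop_mul_const (inv_pos.2 hc0)
  have hα' : ∀ᶠ t in atTop, α t ≠ 0 ∧ α (t * c⁻¹) ≠ 0 := hα.and (hmul.eventually hα)
  refine ⟨A⁻¹, -B * A⁻¹, inv_pos.2 hA, ((hAc.comp hmul).inv₀ hA.ne').congr' ?_,
    ((hBc.comp hmul).neg.mul ((hAc.comp hmul).inv₀ hA.ne')).congr' ?_⟩ <;>
  filter_upwards [hα'] with t ⟨h₁, h₂⟩ <;>
  simp only [Function.comp, inv_mul_cancel_right₀ hc0.ne', inv_div]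
  rw [neg_mul, div_mul_div_cancel₀ h₂, ← neg_div, neg_sub]

theorem hasScalingLimit_of_one_lt (hα : ∀ᶠ t in atTop, α t ≠ 0) {d : ℝ} (hd : 1 < d)
    (h : ∀ c ∈ Ioc 1 d, HasScalingLimit α β c) {c : ℝ} (hc : 1 < c) : HasScalingLimit α β c := by
  obtain ⟨n, hn⟩ := pow_unbounded_of_one_lt c hd
  induction n generalizing c with
  | zero => simp at hn; linarith
  | succ n ih =>
    by_cases hcd : c ≤ d
    · exact h c ⟨hc, hcd⟩
    have hd0 : 0 < d := one_pos.trans hd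
    have hcd' := (ih (c := c / d) ((one_lt_div hd0).2 (not_le.1 hcd))
      ((div_lt_iff₀ hd0).2 (by rwa [← pow_succ]))).mul hα (h d ⟨hd, le_rfl⟩) hd0
    rwa [div_mul_cancel₀ c hd0.ne'] at hcd'

theorem hasScalingLimit_of_eventually (hα : ∀ᶠ t in atTop, α t ≠ 0)
    (h : ∀ᶠ c in 𝓝[>] 1, HasScalingLimit α β c) {c : ℝ} (hc : 0 < c) : HasScalingLimit α β c := by
  obtain ⟨d, hd, hsub⟩ := mem_nhdsGT_iff_exists_Ioc_subset.1 h
  rcases lt_trichotomy c 1 with hc1 | rfl | hc1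
  · simpa using (hasScalingLimit_of_one_lt hα hd hsub ((one_lt_inv₀ hc).2 hc1)).inv hα
      (inv_pos.2 hc)
  · exact hasScalingLimit_one hα
  · exact hasScalingLimit_of_one_lt hα hd hsub hc1

theorem eventually_monotone_rescaled {V : ℝ → ℝ → ℝ} (hV : ∀ᶠ t in atTop, Monotone (V t))
    (hα : ∀ᶠ t in atTop, 0 ≤ α t) : ∀ᶠ t in atTop, Monotone fun x => V t (α t * x + β t) := by
  filter_upwards [hV, hα] with t hVt hαt x y hxy
  exact hVt (by gcongr)

theorem tendsto_rescaled_iff {V : ℝ → ℝ → ℝ} (hα : ∀ᶠ t in atTop, α t ≠ 0) {c x L : ℝ} :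
    Tendsto (fun t => V t (α t * (α (t * c) / α t * x + (β (t * c) - β t) / α t) + β t)) atTop
      (𝓝 L) ↔ Tendsto (fun t => V t (α (t * c) * x + β (t * c))) atTop (𝓝 L) :=
  tendsto_congr' <| hα.mono fun t ht => by
    dsimp only
    congr 1
    field_simp
    ring

end ScalingLimit

theorem straddles_of_sandwich {U W : ℝ → ℝ} (hU : Monotone U) (hW : Monotone W)
    (hU1 : Tendsto U atTop (𝓝 1)) {κ x₀ x₁ : ℝ} (hκ0 : 0 < κ) (hκ1 : κ ≤ 1)
    (hx₁ : ContinuousAt U x₁) (h₁ : U x₁ < κ) (h₀ : U x₀ < κ * U x₁)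
    (h₀₁ : κ * U x₀ + (1 - κ) < U x₁)
    (hsand : ∀ x, ContinuousAt U x → ContinuousAt W x →
      κ * U x ≤ W x ∧ W x ≤ κ * U x + (1 - κ)) :
    Straddles U W ∧ Straddles W U := by
  have hcont : ∀ᶠ x in cocountable, ContinuousAt U x ∧ ContinuousAt W x :=
    hU.eventually_continuousAt.and hW.eventually_continuousAt
  obtain ⟨y₀, hy₀, hUy₀, hWy₀⟩ := exists_mem_Ioo_of_cocountable hcont (sub_one_lt x₀)
  obtain ⟨y₁, hy₁, hκy₁, hUy₁, hWy₁⟩ :=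
    exists_lt_of_nhds_of_cocountable ((hx₁.const_mul κ).eventually (lt_mem_nhds h₀)) hcont
  obtain ⟨y₂, hκy₂, hUy₂, hWy₂⟩ := exists_of_atTop_of_cocountable
    ((hU1.const_mul κ).eventually (lt_mem_nhds (by simpa using h₁))) hcont
  have hUy₁1 : U y₁ < 1 := ((hU hy₁.le).trans_lt h₁).trans_le hκ1
  have hWy₁1 : W y₁ < 1 := by
    nlinarith [(hsand y₁ hUy₁ hWy₁).2, mul_lt_mul_of_pos_left hUy₁1 hκ0]
  obtain ⟨y₃, hy₃, hUy₃, -⟩ := exists_of_atTop_of_cocountable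
    (hU1.eventually (lt_mem_nhds hWy₁1)) hcont
  have hy₀x₀ : U y₀ ≤ U x₀ := hU hy₀.2.le
  refine ⟨⟨y₀, y₃, y₁, hUy₀, hUy₃, hWy₁, ?_, hy₃⟩, ⟨y₀, y₂, x₁, hWy₀, hWy₂, hx₁, ?_, ?_⟩⟩
  · linarith [(hsand y₁ hUy₁ hWy₁).1]
  · nlinarith [(hsand y₀ hUy₀ hWy₀).2]
  · linarith [(hsand y₂ hUy₂ hWy₂).1]

theorem eventually_hasScalingLimit_of_sandwich {V : ℝ → ℝ → ℝ} {α β H : ℝ → ℝ}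
    {W : ℝ → ℝ → ℝ} (hV : ∀ᶠ t in atTop, Monotone (V t)) (hα : ∀ᶠ t in atTop, 0 < α t)
    (hH : Monotone H) (hH1 : Tendsto H atTop (𝓝 1))
    (hHinc : ∃ p q, p ≠ q ∧ IsPointOfIncrease H p ∧ IsPointOfIncrease H q)
    (hW : ∀ c, 1 < c → Monotone (W c))
    (hVH : ∀ x, ContinuousAt H x → Tendsto (fun t => V t (α t * x + β t)) atTop (𝓝 (H x)))
    (hVW : ∀ c, 1 < c → ∀ x, ContinuousAt (W c) x →
      Tendsto (fun t => V t (α (t * c) * x + β (t * c))) atTop (𝓝 (W c x)))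
    (hsand : ∀ c, 1 < c → ∀ x, ContinuousAt H x → ContinuousAt (W c) x →
      c⁻¹ * H x ≤ W c x ∧ W c x ≤ c⁻¹ * H x + (1 - c⁻¹)) :
    ∀ᶠ c in 𝓝[>] 1, HasScalingLimit α β c := by
  obtain ⟨p, q, hpq, hp, hq⟩ := hHinc
  wlog hlt : p < q generalizing p q
  · exact this q p hpq.symm hq hp (hpq.lt_or_gt.resolve_left hlt)
  obtain ⟨x₁, ⟨hpx, hxq⟩, hx₁⟩ := exists_mem_Ioo_of_cocountable hH.eventually_continuousAt hlt
  have h₀₁ : H (p - (x₁ - p)) < H x₁ := by simpa using hp (x₁ - p) (sub_pos.2 hpx)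
  have h₁ : H x₁ < 1 := by
    simpa using (hq (q - x₁) (sub_pos.2 hxq)).trans_le (hH.ge_of_tendsto hH1 _)
  -- the hypotheses of `straddles_of_sandwich` for `κ = c⁻¹` hold strictly at `c = 1`
  have hinv : Tendsto (fun c : ℝ => c⁻¹) (𝓝[>] 1) (𝓝 1) := by
    simpa using (continuousAt_inv₀ (one_ne_zero (α := ℝ))).tendsto.mono_left nhdsWithin_le_nhds
  filter_upwards [self_mem_nhdsWithin (s := Ioi 1), hinv.eventually (lt_mem_nhds h₁),
    (hinv.mul_const (H x₁)).eventually (lt_mem_nhds (by simpa using h₀₁)),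
    ((hinv.mul_const (H (p - (x₁ - p)))).add ((tendsto_const_nhds (x := 1)).sub hinv)).eventually
      (gt_mem_nhds (by simpa using h₀₁))] with c (hc : 1 < c) hc₁ hc₀ hc₀₁
  obtain ⟨hHW, hWH⟩ := straddles_of_sandwich hH (hW c hc) hH1 (inv_pos.2 (one_pos.trans hc))
    (inv_le_one_of_one_le₀ hc.le) hx₁ hc₁ hc₀ hc₀₁ (hsand c hc)
  have hα₀ : ∀ᶠ t in atTop, α t ≠ 0 := hα.mono fun t ht => ht.ne'
  refine exists_tendsto_of_tendsto_monotone (G := fun t x => V t (α t * x + β t))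
    (eventually_monotone_rescaled hV (hα.mono fun _ h => h.le)) hH (hW c hc) hVH
    (fun x hx => (tendsto_rescaled_iff hα₀).2 (hVW c hc x hx)) ?_ hHW hWH hpq hp hq
  filter_upwards [hα, (tendsto_id.atTop_mul_const (one_pos.trans hc)).eventually hα]
    with t h₁ h₂
  positivity

section Exceedance

variable {Ω : Type*} [MeasurableSpace Ω] {μ : Measure Ω} {X Y : Ω → ℝ}

/-- The distribution function of `X` given `Y > t`, up to the factor `t · μ[Y > t] → 1`. -/
noncomputable def exceedanceCDF (μ : Measure Ω) (X Y : Ω → ℝ) (t u : ℝ) : ℝ :=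
  t * μ.real {ω | X ω ≤ u ∧ t < Y ω}

theorem exceedanceCDF_mono [IsFiniteMeasure μ] {t : ℝ} (ht : 0 ≤ t) :
    Monotone (exceedanceCDF μ X Y t) := fun _ _ huv =>
  mul_le_mul_of_nonneg_left (measureReal_mono fun _ hω => ⟨hω.1.trans huv, hω.2⟩) ht

theorem inv_mul_exceedanceCDF_mul {c : ℝ} (hc : c ≠ 0) (t u : ℝ) :
    c⁻¹ * exceedanceCDF μ X Y (t * c) u = t * μ.real {ω | X ω ≤ u ∧ t * c < Y ω} := by
  rw [exceedanceCDF, ← mul_assoc, mul_comm c⁻¹, mul_inv_cancel_right₀ hc]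

theorem inv_mul_exceedanceCDF_mul_le [IsFiniteMeasure μ] {t c : ℝ} (ht : 0 ≤ t) (hc : 1 ≤ c)
    (u : ℝ) : c⁻¹ * exceedanceCDF μ X Y (t * c) u ≤ exceedanceCDF μ X Y t u := by
  rw [inv_mul_exceedanceCDF_mul (one_pos.trans_le hc).ne']
  exact mul_le_mul_of_nonneg_left
    (measureReal_mono fun _ hω => ⟨hω.1, (le_mul_of_one_le_right ht hc).trans_lt hω.2⟩) ht

theorem exceedanceCDF_le_inv_mul_exceedanceCDF_mul_add [IsFiniteMeasure μ] (hY : Measurable Y)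
    {t c : ℝ} (ht : 0 ≤ t) (hc : 1 ≤ c) (u : ℝ) :
    exceedanceCDF μ X Y t u ≤ c⁻¹ * exceedanceCDF μ X Y (t * c) u +
      (t * μ.real {ω | t < Y ω} - t * μ.real {ω | t * c < Y ω}) := by
  have hsub : {ω | t * c < Y ω} ⊆ {ω | t < Y ω} := fun _ hω =>
    (le_mul_of_one_le_right ht hc).trans_lt hω
  rw [inv_mul_exceedanceCDF_mul (one_pos.trans_le hc).ne', ← mul_sub, ← mul_add, exceedanceCDF,
    ← measureReal_sdiff hsub (measurableSet_lt measurable_const hY)]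
  refine mul_le_mul_of_nonneg_left ((measureReal_mono fun ω hω => ?_).trans
    (measureReal_union_le _ _)) ht
  by_cases h : t * c < Y ω
  · exact Or.inl ⟨hω.1, h⟩
  · exact Or.inr ⟨hω.2, h⟩

theorem tendsto_exceedanceCDF_of_tendsto {α β : ℝ → ℝ} (hα : ∀ᶠ s in atTop, 0 < α s) {c x L : ℝ}
    (hc : 0 < c)
    (h : Tendsto (fun s => s * μ.real {ω | (X ω - β s) / α s ≤ x ∧ s * c⁻¹ < Y ω}) atTop (𝓝 L)) :
    Tendsto (fun t => exceedanceCDF μ X Y t (α (t * c) * x + β (t * c))) atTop (𝓝 (c⁻¹ * L)) := by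
  have hmul : Tendsto (· * c) atTop atTop := tendsto_id.atTop_mul_const hc
  refine ((h.comp hmul).const_mul c⁻¹).congr' ?_
  filter_upwards [hmul.eventually hα] with t ht
  have hset : {ω | (X ω - β (t * c)) / α (t * c) ≤ x ∧ t * c * c⁻¹ < Y ω} =
      {ω | X ω ≤ α (t * c) * x + β (t * c) ∧ t < Y ω} := by
    ext ω
    simp only [mem_ofPred_eq, div_le_iff₀ ht, mul_inv_cancel_right₀ hc.ne', sub_le_iff_le_add,
      mul_comm x]
  simp only [Function.comp_apply, hset, exceedanceCDF]
  field_simp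

variable [IsFiniteMeasure μ] {y : ℝ → ℝ} {c L M : ℝ}

theorem inv_mul_le_of_tendsto_exceedanceCDF (hc : 1 ≤ c)
    (hL : Tendsto (fun t => exceedanceCDF μ X Y t (y t)) atTop (𝓝 L))
    (hM : Tendsto (fun t => exceedanceCDF μ X Y t (y (t * c))) atTop (𝓝 M)) : c⁻¹ * L ≤ M := by
  have hmul : Tendsto (· * c) atTop atTop := tendsto_id.atTop_mul_const (one_pos.trans_le hc)
  refine le_of_tendsto_of_tendsto ((hL.comp hmul).const_mul c⁻¹) hM ?_
  filter_upwards [eventually_ge_atTop 0] with t ht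
  exact inv_mul_exceedanceCDF_mul_le ht hc _

theorem le_inv_mul_add_of_tendsto_exceedanceCDF (hY : Measurable Y)
    (hYstd : Tendsto (fun t => t * μ.real {ω | t < Y ω}) atTop (𝓝 1)) (hc : 1 ≤ c)
    (hL : Tendsto (fun t => exceedanceCDF μ X Y t (y t)) atTop (𝓝 L))
    (hM : Tendsto (fun t => exceedanceCDF μ X Y t (y (t * c))) atTop (𝓝 M)) :
    M ≤ c⁻¹ * L + (1 - c⁻¹) := by
  have hc0 : c ≠ 0 := (one_pos.trans_le hc).ne'
  have hmul : Tendsto (· * c) atTop atTop := tendsto_id.atTop_mul_const (one_pos.trans_le hc)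
  have htail : Tendsto (fun t => t * μ.real {ω | t * c < Y ω}) atTop (𝓝 c⁻¹) := by
    refine (mul_one c⁻¹ ▸ (hYstd.comp hmul).const_mul c⁻¹).congr fun t => ?_
    simp only [Function.comp_apply]
    rw [← mul_assoc, mul_comm c⁻¹, mul_inv_cancel_right₀ hc0]
  refine le_of_tendsto_of_tendsto hM (((hL.comp hmul).const_mul c⁻¹).add (hYstd.sub htail)) ?_
  filter_upwards [eventually_ge_atTop 0] with t ht
  exact exceedanceCDF_le_inv_mul_exceedanceCDF_mul_add hY ht hc _

end Exceedance

theorem stmt_15_general {Ω : Type*} [MeasureSpace Ω] [IsProbabilityMeasure (ℙ : Measure Ω)]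
    (X Ys : Ω → ℝ) (hYm : Measurable Ys)
    (α : ℝ → ℝ) (β : ℝ → ℝ) (hα_pos : ∀ t : ℝ, 0 < t → 0 < α t)
    (F : ℝ → ℝ → ℝ)
    (hconv : ∀ y : ℝ, 0 < y → ∀ x : ℝ, ContinuousAt (fun u => F u y) x →
      Tendsto (fun t : ℝ =>
          t * (ℙ {ω | (X ω - β t) / α t ≤ x ∧ t * y < Ys ω}).toReal) atTop
        (nhds (F x y)))
    (hF_mono : ∀ y : ℝ, 0 < y → Monotone (fun x => F x y))
    (hF_nondeg : ∀ y : ℝ, 0 < y → ∃ x₁ x₂ : ℝ, x₁ ≠ x₂ ∧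
      IsPointOfIncrease (fun x => F x y) x₁ ∧ IsPointOfIncrease (fun x => F x y) x₂)
    (hYstd : Tendsto (fun t : ℝ => t * (ℙ {ω | t < Ys ω}).toReal) atTop (nhds 1))
    (hH1 : Tendsto (fun x => F x 1) atTop (nhds 1)) :
    ∀ c : ℝ, 0 < c → ∃ ψ₁ ψ₂ : ℝ, 0 < ψ₁ ∧
      Tendsto (fun t : ℝ => α (t * c) / α t) atTop (nhds ψ₁) ∧
      Tendsto (fun t : ℝ => (β (t * c) - β t) / α t) atTop (nhds ψ₂) ∧
      ∀ x : ℝ, ContinuousAt (fun u => F u (1 / c)) x →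
        ContinuousAt (fun u => F u 1) (ψ₁ * x + ψ₂) →
        (1 / c) * F x (1 / c) = F (ψ₁ * x + ψ₂) 1 := by
  set V := exceedanceCDF ℙ X Ys
  have hV : ∀ᶠ t in atTop, Monotone (V t) :=
    (eventually_ge_atTop 0).mono fun _ ht => exceedanceCDF_mono ht
  have hα : ∀ᶠ t in atTop, 0 < α t := (eventually_gt_atTop 0).mono hα_pos
  have hα₀ : ∀ᶠ t in atTop, α t ≠ 0 := hα.mono fun _ h => h.ne'
  have hlim : ∀ c, 0 < c → ∀ x, ContinuousAt (fun u => F u c⁻¹) x →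
      Tendsto (fun t => V t (α (t * c) * x + β (t * c))) atTop (𝓝 (c⁻¹ * F x c⁻¹)) :=
    fun c hc x hx => tendsto_exceedanceCDF_of_tendsto hα hc (hconv c⁻¹ (inv_pos.2 hc) x hx)
  have hlimH : ∀ x, ContinuousAt (fun u => F u 1) x →
      Tendsto (fun t => V t (α t * x + β t)) atTop (𝓝 (F x 1)) := by
    simpa using hlim 1 one_pos
  have hlimW : ∀ c, 1 < c → ∀ x, ContinuousAt (fun u => c⁻¹ * F u c⁻¹) x →
      Tendsto (fun t => V t (α (t * c) * x + β (t * c))) atTop (𝓝 (c⁻¹ * F x c⁻¹)) :=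
    fun c hc x hx => hlim c (one_pos.trans hc) x
      ((continuousAt_const_smul_iff₀ (inv_ne_zero (one_pos.trans hc).ne')).1 hx)
  have hnear : ∀ᶠ c in 𝓝[>] 1, HasScalingLimit α β c :=
    eventually_hasScalingLimit_of_sandwich (W := fun c x => c⁻¹ * F x c⁻¹) hV hα
      (hF_mono 1 one_pos) hH1 (hF_nondeg 1 one_pos)
      (fun c hc => (hF_mono c⁻¹ (inv_pos.2 (one_pos.trans hc))).const_mul (by positivity))
      hlimH hlimW fun c hc x hxH hxW =>
        ⟨inv_mul_le_of_tendsto_exceedanceCDF hc.le (hlimH x hxH) (hlimW c hc x hxW),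
          le_inv_mul_add_of_tendsto_exceedanceCDF hYm hYstd hc.le (hlimH x hxH) (hlimW c hc x hxW)⟩
  intro c hc
  obtain ⟨ψ₁, ψ₂, hψ₁, hA, hB⟩ := hasScalingLimit_of_eventually hα₀ hnear hc
  refine ⟨ψ₁, ψ₂, hψ₁, hA, hB, fun x hx hxH => ?_⟩
  rw [one_div] at hx ⊢
  exact apply_eq_of_tendsto (G := fun t x => V t (α t * x + β t))
    (eventually_monotone_rescaled hV (hα.mono fun _ h => h.le)) (hF_mono 1 one_pos) hlimH
    ((tendsto_rescaled_iff hα₀).2 (hlim c hc x hx)) hA hB hxH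

/-- Conditioned limit theorem (Heffernan–Resnick): if
`t·P[(X - β(t))/α(t) ≤ x, Y* > t y] → F(x,y)` at continuity points, with the
`Y`-variable standardized (`t·P[Y* > t] → 1`), each `F(·,y)` nondecreasing and
nondegenerate, and `H = F(·,1)` a probability distribution function, then the
limits `ψ₁(c) = lim α(tc)/α(t) > 0` and `ψ₂(c) = lim (β(tc) - β(t))/α(t)` exist
for every `c > 0` and `(1/c)·F(x,1/c) = H(ψ₁(c)x + ψ₂(c))` at continuity
points. -/
theorem stmt_15 {Ω : Type*} [MeasureSpace Ω] [IsProbabilityMeasure (ℙ : Measure Ω)]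
    (X Ys : Ω → ℝ) (hXm : Measurable X) (hYm : Measurable Ys)
    (hYpos : ∀ ω, 0 < Ys ω)
    (α : ℝ → ℝ) (β : ℝ → ℝ) (hα_pos : ∀ t : ℝ, 0 < t → 0 < α t)
    (F : ℝ → ℝ → ℝ) (hF_nonneg : ∀ x y, 0 ≤ F x y)
    (hconv : ∀ y : ℝ, 0 < y → ∀ x : ℝ, ContinuousAt (fun u => F u y) x →
      Tendsto (fun t : ℝ =>
          t * (ℙ {ω | (X ω - β t) / α t ≤ x ∧ t * y < Ys ω}).toReal) atTop
        (nhds (F x y)))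
    (hF_mono : ∀ y : ℝ, 0 < y → Monotone (fun x => F x y))
    (hF_nondeg : ∀ y : ℝ, 0 < y → ∃ x₁ x₂ : ℝ, x₁ ≠ x₂ ∧
      IsPointOfIncrease (fun x => F x y) x₁ ∧ IsPointOfIncrease (fun x => F x y) x₂)
    (hYstd : Tendsto (fun t : ℝ => t * (ℙ {ω | t < Ys ω}).toReal) atTop (nhds 1))
    (hH1 : Tendsto (fun x => F x 1) atTop (nhds 1)) :
    ∀ c : ℝ, 0 < c → ∃ ψ₁ ψ₂ : ℝ, 0 < ψ₁ ∧
      Tendsto (fun t : ℝ => α (t * c) / α t) atTop (nhds ψ₁) ∧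
      Tendsto (fun t : ℝ => (β (t * c) - β t) / α t) atTop (nhds ψ₂) ∧
      ∀ x : ℝ, ContinuousAt (fun u => F u (1 / c)) x →
        ContinuousAt (fun u => F u 1) (ψ₁ * x + ψ₂) →
        (1 / c) * F x (1 / c) = F (ψ₁ * x + ψ₂) 1 :=
  stmt_15_general X Ys hYm α β hα_pos F hconv hF_mono hF_nondeg hYstd hH1
end

section
/- Let Φ denote the standard normal distribution function, Φ(x) = ∫_{−∞}^x e^{−t²/2}/√(2π) dt. Define b(t) = (1/(1−Φ))^←(t) (the left-continuous inverse of 1/(1−Φ)) and a(t) = 1/√(2 log t) for t > 1. Then for every x ∈ ℝ, t·(1 − Φ(a(t)·x + b(t))) → e^{−x} as t → ∞; equivalently, if N is a standard normal random variable, t·P[(N − b(t))/a(t) > x] → e^{−x} for all x ∈ ℝ. -/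
/-!
The Mills-ratio bounds `y² / (y² + 1) · φ(y) / y ≤ 1 - Φ(y) ≤ φ(y) / y` give `1 - Φ(y) ~ φ(y) / y`.
Since `1 - Φ` is continuous, `1 - Φ(b(t)) = 1 / t`, so with `c = a(t) b(t) x` we get
`t (1 - Φ(a(t) x + b(t))) = (1 - Φ(b + c / b)) / (1 - Φ(b))`, which tends to `e^{-x}` because
`φ(b + c / b) / φ(b) = exp(-c - (c / b)² / 2)`. That `c → x`, i.e. `a(t) b(t) → 1`, is again the
Mills bound: `log t = -log (1 - Φ(b)) = b² / 2 + O(log b)`.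
-/

open MeasureTheory Filter

noncomputable def stdNormalCDF (x : ℝ) : ℝ :=
  ∫ t in Set.Iic x, Real.exp (-(t ^ 2) / 2) / Real.sqrt (2 * Real.pi)

open Real Set ProbabilityTheory Topology

theorem Antitone.apply_csInf_setOf_le {α β : Type*} [ConditionallyCompleteLinearOrder α]
    [TopologicalSpace α] [OrderTopology α] [DenselyOrdered α] [LinearOrder β]
    [TopologicalSpace β] [OrderClosedTopology β] {f : α → β} (hf : Antitone f)
    (hcont : Continuous f) {c : β} (hle : ∃ y, f y ≤ c) (hlt : ∃ y, c < f y) :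
    f (sInf {y | f y ≤ c}) = c := by
  obtain ⟨z, hz⟩ := hlt
  set S := {y | f y ≤ c}
  have hz_lower : z ∈ lowerBounds S := fun y hy => (hf.reflect_lt (hy.trans_lt hz)).le
  have hmem : sInf S ∈ S := (isClosed_le hcont continuous_const).csInf_mem hle ⟨z, hz_lower⟩
  have hz_lt : z < sInf S :=
    (le_csInf hle hz_lower).lt_of_ne fun h => (h ▸ hz).not_ge hmem
  have hbelow : Iio (sInf S) ⊆ {y | c ≤ f y} := fun y hy =>
    le_of_not_ge fun h => (csInf_le ⟨z, hz_lower⟩ h).not_gt hy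
  refine le_antisymm hmem ?_
  have := (isClosed_le continuous_const hcont).closure_subset_iff.2 hbelow
  rw [closure_Iio' ⟨z, hz_lt⟩] at this
  exact this le_rfl

noncomputable def stdNormalPDF (t : ℝ) : ℝ := exp (-(t ^ 2) / 2) / √(2 * π)

noncomputable def stdNormalTail (y : ℝ) : ℝ := 1 - stdNormalCDF y

lemma stdNormalCDF_eq_integral (x : ℝ) : stdNormalCDF x = ∫ t in Iic x, stdNormalPDF t := rfl

lemma stdNormalPDF_eq_gaussianPDFReal : stdNormalPDF = gaussianPDFReal 0 1 := by
  ext t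
  simp [stdNormalPDF, gaussianPDFReal, div_eq_inv_mul]

lemma stdNormalPDF_pos (t : ℝ) : 0 < stdNormalPDF t := by
  unfold stdNormalPDF; positivity

lemma integrable_stdNormalPDF : Integrable stdNormalPDF := by
  rw [stdNormalPDF_eq_gaussianPDFReal]; exact integrable_gaussianPDFReal 0 1

lemma integral_stdNormalPDF : ∫ t, stdNormalPDF t = 1 := by
  rw [stdNormalPDF_eq_gaussianPDFReal]; exact integral_gaussianPDFReal_eq_one 0 one_ne_zero

lemma stdNormalCDF_eq_cdf : stdNormalCDF = cdf (gaussianReal 0 1) := by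
  ext x
  rw [cdf_eq_real, measureReal_def, gaussianReal_apply_eq_integral _ one_ne_zero,
    ENNReal.toReal_ofReal (setIntegral_nonneg measurableSet_Iic
      fun t _ => gaussianPDFReal_nonneg 0 1 t), ← stdNormalPDF_eq_gaussianPDFReal]
  rfl

lemma stdNormalTail_eq_integral_Ioi (y : ℝ) :
    stdNormalTail y = ∫ t in Ioi y, stdNormalPDF t := by
  rw [stdNormalTail, stdNormalCDF_eq_integral, ← integral_stdNormalPDF,
    ← intervalIntegral.integral_Iic_add_Ioi integrable_stdNormalPDF.integrableOn
      integrable_stdNormalPDF.integrableOn]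
  ring

lemma antitone_stdNormalTail : Antitone stdNormalTail := fun _ _ h =>
  sub_le_sub_left (by rw [stdNormalCDF_eq_cdf]; exact monotone_cdf _ h) 1

lemma continuous_stdNormalCDF : Continuous stdNormalCDF := by
  have h (x : ℝ) : stdNormalCDF 0 + ∫ t in (0 : ℝ)..x, stdNormalPDF t = stdNormalCDF x := by
    rw [← intervalIntegral.integral_Iic_sub_Iic integrable_stdNormalPDF.integrableOn
      integrable_stdNormalPDF.integrableOn, stdNormalCDF_eq_integral, stdNormalCDF_eq_integral]
    ring
  exact (continuous_const.add (intervalIntegral.continuous_primitive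
    (fun _ _ => integrable_stdNormalPDF.intervalIntegrable) 0)).congr h

lemma tendsto_stdNormalTail_atTop : Tendsto stdNormalTail atTop (𝓝 0) := by
  have := (tendsto_cdf_atTop (μ := gaussianReal 0 1)).const_sub 1
  rwa [sub_self, ← stdNormalCDF_eq_cdf] at this

lemma tendsto_stdNormalTail_atBot : Tendsto stdNormalTail atBot (𝓝 1) := by
  have := (tendsto_cdf_atBot (μ := gaussianReal 0 1)).const_sub 1
  rwa [sub_zero, ← stdNormalCDF_eq_cdf] at this

lemma hasDerivAt_stdNormalPDF (t : ℝ) : HasDerivAt stdNormalPDF (-t * stdNormalPDF t) t := by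
  have h : HasDerivAt (fun s : ℝ => -(s ^ 2) / 2) (-t) t := by
    simpa [neg_div] using ((hasDerivAt_pow 2 t).neg).div_const 2
  exact (h.exp.div_const √(2 * π)).congr_deriv (by rw [stdNormalPDF]; ring)

lemma tendsto_stdNormalPDF_atTop : Tendsto stdNormalPDF atTop (𝓝 0) := by
  have h : Tendsto (fun t : ℝ => -(t ^ 2) / 2) atTop atBot :=
    (tendsto_neg_atTop_atBot.comp (tendsto_pow_atTop two_ne_zero)).atBot_div_const two_pos
  have := (tendsto_exp_atBot.comp h).div_const √(2 * π)
  rwa [zero_div] at this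

lemma integral_Ioi_mul_stdNormalPDF {y : ℝ} (hy : 0 ≤ y) :
    IntegrableOn (fun t => t * stdNormalPDF t) (Ioi y) ∧
      ∫ t in Ioi y, t * stdNormalPDF t = stdNormalPDF y := by
  have hderiv (t : ℝ) (_ : t ∈ Ici y) :
      HasDerivAt (fun s => -stdNormalPDF s) (t * stdNormalPDF t) t :=
    (hasDerivAt_stdNormalPDF t).neg.congr_deriv (by ring)
  have hnonneg (t : ℝ) (ht : t ∈ Ioi y) : 0 ≤ t * stdNormalPDF t :=
    mul_nonneg (hy.trans (le_of_lt ht)) (stdNormalPDF_pos t).le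
  have hlim : Tendsto (fun s => -stdNormalPDF s) atTop (𝓝 0) := by
    simpa using tendsto_stdNormalPDF_atTop.neg
  refine ⟨integrableOn_Ioi_deriv_of_nonneg' hderiv hnonneg hlim, ?_⟩
  rw [integral_Ioi_of_hasDerivAt_of_nonneg' hderiv hnonneg hlim]
  ring

lemma integral_Ioi_one_add_inv_sq_mul_stdNormalPDF {y : ℝ} (hy : 0 < y) :
    IntegrableOn (fun t => (1 + (t ^ 2)⁻¹) * stdNormalPDF t) (Ioi y) ∧
      ∫ t in Ioi y, (1 + (t ^ 2)⁻¹) * stdNormalPDF t = stdNormalPDF y / y := by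
  have hderiv (t : ℝ) (ht : t ∈ Ici y) :
      HasDerivAt (fun s => -(stdNormalPDF s / s)) ((1 + (t ^ 2)⁻¹) * stdNormalPDF t) t := by
    have ht0 : t ≠ 0 := (hy.trans_le ht).ne'
    refine ((hasDerivAt_stdNormalPDF t).div (hasDerivAt_id t) ht0).neg.congr_deriv ?_
    simp only [id]
    field_simp
    ring
  have hnonneg (t : ℝ) (_ : t ∈ Ioi y) : 0 ≤ (1 + (t ^ 2)⁻¹) * stdNormalPDF t :=
    mul_nonneg (by positivity) (stdNormalPDF_pos t).le
  have hlim : Tendsto (fun s => -(stdNormalPDF s / s)) atTop (𝓝 0) := by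
    simpa only [div_eq_mul_inv, mul_zero, neg_zero] using
      (tendsto_stdNormalPDF_atTop.mul tendsto_inv_atTop_zero).neg
  refine ⟨integrableOn_Ioi_deriv_of_nonneg' hderiv hnonneg hlim, ?_⟩
  rw [integral_Ioi_of_hasDerivAt_of_nonneg' hderiv hnonneg hlim]
  ring

lemma stdNormalTail_le {y : ℝ} (hy : 0 < y) : stdNormalTail y ≤ stdNormalPDF y / y := by
  obtain ⟨hint, hval⟩ := integral_Ioi_mul_stdNormalPDF hy.le
  calc stdNormalTail y = ∫ t in Ioi y, stdNormalPDF t := stdNormalTail_eq_integral_Ioi y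
    _ ≤ ∫ t in Ioi y, y⁻¹ * (t * stdNormalPDF t) := by
      refine setIntegral_mono_on integrable_stdNormalPDF.integrableOn (hint.const_mul _)
        measurableSet_Ioi fun t (ht : y < t) => ?_
      rw [← mul_assoc, inv_mul_eq_div]
      exact le_mul_of_one_le_left (stdNormalPDF_pos t).le ((one_le_div hy).2 ht.le)
    _ = stdNormalPDF y / y := by rw [integral_const_mul, hval, inv_mul_eq_div]

lemma le_stdNormalTail {y : ℝ} (hy : 0 < y) :
    y ^ 2 / (y ^ 2 + 1) * (stdNormalPDF y / y) ≤ stdNormalTail y := by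
  obtain ⟨hint, hval⟩ := integral_Ioi_one_add_inv_sq_mul_stdNormalPDF hy
  calc y ^ 2 / (y ^ 2 + 1) * (stdNormalPDF y / y)
      = ∫ t in Ioi y, y ^ 2 / (y ^ 2 + 1) * ((1 + (t ^ 2)⁻¹) * stdNormalPDF t) := by
        rw [integral_const_mul, hval]
    _ ≤ ∫ t in Ioi y, stdNormalPDF t := by
      refine setIntegral_mono_on (hint.const_mul _) integrable_stdNormalPDF.integrableOn
        measurableSet_Ioi fun t (ht : y < t) => ?_
      rw [← mul_assoc]
      refine mul_le_of_le_one_left (stdNormalPDF_pos t).le ?_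
      have : y ^ 2 * (t ^ 2)⁻¹ ≤ 1 := by
        rw [← div_eq_mul_inv, div_le_one (pow_pos (hy.trans ht) 2)]
        exact pow_le_pow_left₀ hy.le ht.le 2
      rw [div_mul_eq_mul_div, div_le_one (by positivity)]
      nlinarith
    _ = stdNormalTail y := (stdNormalTail_eq_integral_Ioi y).symm

lemma stdNormalTail_pos (y : ℝ) : 0 < stdNormalTail y := by
  have h1 : (0 : ℝ) < max y 1 := lt_max_of_lt_right one_pos
  calc 0 < (max y 1) ^ 2 / ((max y 1) ^ 2 + 1) * (stdNormalPDF (max y 1) / max y 1) :=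
        mul_pos (div_pos (pow_pos h1 2) (by positivity)) (div_pos (stdNormalPDF_pos _) h1)
    _ ≤ stdNormalTail (max y 1) := le_stdNormalTail h1
    _ ≤ stdNormalTail y := antitone_stdNormalTail (le_max_left y 1)

lemma tendsto_mul_stdNormalTail_div_stdNormalPDF :
    Tendsto (fun y => y * stdNormalTail y / stdNormalPDF y) atTop (𝓝 1) := by
  have hlower : Tendsto (fun y : ℝ => 1 - (y ^ 2 + 1)⁻¹) atTop (𝓝 1) := by
    simpa using (tendsto_inv_atTop_zero.comp
      (tendsto_atTop_add_const_right _ 1 (tendsto_pow_atTop (α := ℝ) two_ne_zero))).const_sub 1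
  refine tendsto_of_tendsto_of_tendsto_of_le_of_le' hlower tendsto_const_nhds ?_ ?_
  all_goals filter_upwards [eventually_gt_atTop 0] with y hy
  · rw [le_div_iff₀ (stdNormalPDF_pos y)]
    calc (1 - (y ^ 2 + 1)⁻¹) * stdNormalPDF y
        = y * (y ^ 2 / (y ^ 2 + 1) * (stdNormalPDF y / y)) := by field_simp; ring
      _ ≤ y * stdNormalTail y := by gcongr; exact le_stdNormalTail hy
  · rw [div_le_one (stdNormalPDF_pos y), mul_comm]
    exact (le_div_iff₀ hy).1 (stdNormalTail_le hy)

lemma stdNormalPDF_add_div {y : ℝ} (hy : y ≠ 0) (c : ℝ) :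
    stdNormalPDF (y + c / y) = stdNormalPDF y * exp (-c - (c / y) ^ 2 / 2) := by
  rw [stdNormalPDF, stdNormalPDF, div_mul_eq_mul_div, ← exp_add]
  congr 2
  field_simp
  ring

theorem tendsto_stdNormalTail_add_div_div {ι : Type*} {l : Filter ι} {y c : ι → ℝ} {x : ℝ}
    (hy : Tendsto y l atTop) (hc : Tendsto c l (𝓝 x)) :
    Tendsto (fun i => stdNormalTail (y i + c i / y i) / stdNormalTail (y i)) l
      (𝓝 (exp (-x))) := by
  have hcy : Tendsto (fun i => c i / y i) l (𝓝 0) := hc.div_atTop hy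
  have hp : Tendsto (fun i => y i + c i / y i) l atTop := hy.atTop_add hcy
  have hmills := tendsto_mul_stdNormalTail_div_stdNormalPDF
  have hexp : Tendsto (fun i => exp (-c i - (c i / y i) ^ 2 / 2)) l (𝓝 (exp (-x))) := by
    simpa using (hc.neg.sub ((hcy.pow 2).div_const 2)).rexp
  have hshift : Tendsto (fun i => (1 + c i / y i / y i)⁻¹) l (𝓝 1) := by
    simpa using ((hcy.div_atTop hy).const_add 1).inv₀ (by norm_num)
  -- `Q p / Q y = (p Q p / φ p) / (y Q y / φ y) · (φ p / φ y) · (y / p)`, where `Q = stdNormalTail`,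
  -- `φ = stdNormalPDF` and `p = y + c / y`
  have hlim := (((hmills.comp hp).div (hmills.comp hy) one_ne_zero).mul hexp).mul hshift
  rw [div_one, one_mul, mul_one] at hlim
  refine hlim.congr' ?_
  filter_upwards [hy.eventually_gt_atTop 0, hp.eventually_gt_atTop 0] with i hyi hpi
  simp only [Function.comp_apply, Pi.div_apply]
  have hshift_eq : 1 + c i / y i / y i = (y i + c i / y i) / y i := by field_simp
  rw [stdNormalPDF_add_div hyi.ne', hshift_eq]
  have := stdNormalPDF_pos (y i)
  have := stdNormalTail_pos (y i)
  generalize y i + c i / y i = p at hpi ⊢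
  field_simp

lemma tendsto_two_mul_neg_log_stdNormalTail_div_sq :
    Tendsto (fun y => 2 * -log (stdNormalTail y) / y ^ 2) atTop (𝓝 1) := by
  have hinv : Tendsto (fun y : ℝ => (y ^ 2)⁻¹) atTop (𝓝 0) :=
    tendsto_inv_atTop_zero.comp (tendsto_pow_atTop two_ne_zero)
  have hlogy : Tendsto (fun y => log y / y * y⁻¹) atTop (𝓝 0) := by
    simpa using (isLittleO_log_id_atTop.tendsto_div_nhds_zero).mul tendsto_inv_atTop_zero
  have hlogM : Tendsto (fun y => log (y * stdNormalTail y / stdNormalPDF y)) atTop (𝓝 0) := by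
    simpa using tendsto_mul_stdNormalTail_div_stdNormalPDF.log one_ne_zero
  have hlim := ((((hinv.const_mul (log √(2 * π))).add hlogy).sub
    (hlogM.mul hinv)).const_mul 2).const_add 1
  simp only [mul_zero, add_zero, sub_self] at hlim
  refine hlim.congr' ?_
  filter_upwards [eventually_gt_atTop 0] with y hy
  have hφ := stdNormalPDF_pos y
  have hQ := stdNormalTail_pos y
  have hlogQ : log (stdNormalTail y) =
      log (y * stdNormalTail y / stdNormalPDF y) - (y ^ 2 / 2 + log √(2 * π)) - log y := by
    rw [log_div (by positivity) hφ.ne', log_mul hy.ne' hQ.ne', stdNormalPDF,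
      log_div (exp_pos _).ne' (by positivity), log_exp]
    ring
  rw [hlogQ]
  field_simp
  ring

lemma tendsto_div_sqrt_two_mul_neg_log_stdNormalTail :
    Tendsto (fun y => y / √(2 * -log (stdNormalTail y))) atTop (𝓝 1) := by
  have h := ((continuous_sqrt.tendsto 1).comp
    tendsto_two_mul_neg_log_stdNormalTail_div_sq).inv₀ (by norm_num)
  rw [sqrt_one, inv_one] at h
  refine h.congr' ?_
  filter_upwards [eventually_gt_atTop 0] with y hy
  rw [Function.comp_apply, sqrt_div' _ (sq_nonneg y), sqrt_sq hy.le, inv_div]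

lemma tendsto_atTop_of_tendsto_stdNormalTail {ι : Type*} {l : Filter ι} {f : ι → ℝ}
    (h : Tendsto (fun i => stdNormalTail (f i)) l (𝓝 0)) : Tendsto f l atTop :=
  tendsto_atTop.2 fun M => (h.eventually (gt_mem_nhds (stdNormalTail_pos M))).mono
    fun _ hi => (antitone_stdNormalTail.reflect_lt hi).le

lemma stdNormalTail_sInf_eq_inv {t : ℝ} (ht : 1 < t) :
    stdNormalTail (sInf {y | t ≤ 1 / (1 - stdNormalCDF y)}) = t⁻¹ := by
  have ht0 : 0 < t := by linarith
  have hset : {y | t ≤ 1 / (1 - stdNormalCDF y)} = {y | stdNormalTail y ≤ t⁻¹} := by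
    ext y
    change t ≤ 1 / stdNormalTail y ↔ stdNormalTail y ≤ t⁻¹
    rw [le_one_div ht0 (stdNormalTail_pos y), one_div]
  rw [hset]
  refine antitone_stdNormalTail.apply_csInf_setOf_le
    (continuous_const.sub continuous_stdNormalCDF) ?_ ?_
  · exact (tendsto_stdNormalTail_atTop.eventually (gt_mem_nhds (inv_pos.2 ht0))).exists.imp
      fun _ => le_of_lt
  · exact (tendsto_stdNormalTail_atBot.eventually (lt_mem_nhds (inv_lt_one_of_one_lt₀ ht))).exists

/-- The standard normal distribution lies in the Gumbel maximal domain of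
attraction: with `b(t) = (1/(1-Φ))^←(t)` (left-continuous inverse) and
`a(t) = 1/√(2 log t)`, one has `t·(1 - Φ(a(t)x + b(t))) → e^{-x}` for every
`x ∈ ℝ`. -/
theorem stmt_18 (a b : ℝ → ℝ)
    (hb : ∀ t : ℝ, b t = sInf {y : ℝ | t ≤ 1 / (1 - stdNormalCDF y)})
    (ha : ∀ t : ℝ, 1 < t → a t = 1 / Real.sqrt (2 * Real.log t)) :
    ∀ x : ℝ, Tendsto (fun t : ℝ => t * (1 - stdNormalCDF (a t * x + b t))) atTop
      (nhds (Real.exp (-x))) := by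
  intro x
  have hQb : ∀ᶠ t in atTop, stdNormalTail (b t) = t⁻¹ :=
    (eventually_gt_atTop 1).mono fun t ht => by rw [hb t]; exact stdNormalTail_sInf_eq_inv ht
  have hb_top : Tendsto b atTop atTop :=
    tendsto_atTop_of_tendsto_stdNormalTail
      (tendsto_inv_atTop_zero.congr' (hQb.mono fun _ h => h.symm))
  have hab : Tendsto (fun t => a t * b t) atTop (𝓝 1) := by
    refine (tendsto_div_sqrt_two_mul_neg_log_stdNormalTail.comp hb_top).congr' ?_
    filter_upwards [eventually_gt_atTop 1, hQb] with t ht hQ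
    rw [Function.comp_apply, hQ, log_inv, neg_neg, ha t ht, one_div_mul_eq_div]
  have hlim := tendsto_stdNormalTail_add_div_div hb_top (hab.mul_const x)
  rw [one_mul] at hlim
  refine hlim.congr' ?_
  filter_upwards [hQb, hb_top.eventually_ne_atTop 0] with t hQ hb0
  rw [hQ, div_inv_eq_mul, mul_comm, mul_right_comm, mul_div_cancel_right₀ _ hb0, add_comm]
  rfl
end
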